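/- arXiv:2602.20403 — 4 statements merged into one kernel-verified Lean document; each statement's English description precedes it below -/
import Mathlib

section
/- Gradient bound for the Moreau-type envelope when p > 1: Let Ξ ⊆ ℝ^m be closed and convex, p > 1 and λ > 0, and let ℓ_k: Ξ → ℝ be concave and differentiable with limsup_{‖z‖→∞} ℓ_k(z)/‖z−ξ‖^p ≤ 0 for each ξ ∈ Ξ. Then for each fixed λ the function h_k(ξ,λ) := sup_{z∈Ξ} { ℓ_k(z) − λ‖z−ξ‖^p } is differentiable with respect to ξ, the supremum is attained at a unique point z*, ∇_ξ h_k(ξ,λ) equals the gradient of −λ‖z−ξ‖^p in ξ at z = z*, namely λ p ‖z*−ξ‖^{p−2}(z*−ξ), and ‖∇_ξ h_k(ξ,λ)‖ ≤ ‖∇ℓ_k(ξ)‖ for all ξ ∈ Ξ. -/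
open MeasureTheory Filter
open scoped ENNReal NNReal BigOperators RealInnerProductSpace

set_option autoImplicit false

open Set Metric Topology

noncomputable section

/-- `Vec d` is Euclidean space `ℝ^d`. -/
abbrev Vec (d : ℕ) := EuclideanSpace ℝ (Fin d)


/-- The Moreau-type envelope `h_k(ξ, λ) = sup_{z ∈ Ξ} { h(z) − λ ‖z − ξ‖^p }` (real-valued). -/
def env {d : ℕ} (Ξ : Set (Vec d)) (h : Vec d → ℝ) (p lam : ℝ) (ξ : Vec d) : ℝ :=
  sSup {y | ∃ z ∈ Ξ, y = h z - lam * ‖z - ξ‖ ^ p}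


private lemma aux_rpow_tangent {p : ℝ} (hp : 1 < p) {s t : ℝ} (hs : 0 ≤ s) (ht : 0 ≤ t) :
    s ^ p + p * s ^ (p - 1) * (t - s) ≤ t ^ p := by
  rcases eq_or_lt_of_le hs with h0 | h0
  · rw [← h0, Real.zero_rpow (by linarith : p ≠ 0),
      Real.zero_rpow (by intro h; apply absurd h; intro h'; linarith [sub_eq_zero.1 h'] : p - 1 ≠ 0)]
    simpa using Real.rpow_nonneg ht p
  · have hdiv : (0:ℝ) ≤ t / s := div_nonneg ht h0.le
    have hq := one_add_mul_self_le_rpow_one_add (by linarith : (-1:ℝ) ≤ t / s - 1) hp.le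
    have h1 : (1 : ℝ) + (t / s - 1) = t / s := by ring
    rw [h1] at hq
    have hsp : (0:ℝ) < s ^ p := Real.rpow_pos_of_pos h0 p
    have h2 : s ^ p * (1 + p * (t / s - 1)) ≤ s ^ p * (t / s) ^ p :=
      mul_le_mul_of_nonneg_left hq hsp.le
    rw [Real.div_rpow ht h0.le] at h2
    have h3 : s ^ p * (t ^ p / s ^ p) = t ^ p := by field_simp
    rw [h3] at h2
    have h5 : s ^ p / s = s ^ (p - 1) := by
      rw [Real.rpow_sub h0, Real.rpow_one]
    have h4 : s ^ p * (1 + p * (t / s - 1)) = s ^ p + p * (s ^ p / s) * (t - s) := by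
      field_simp
    rw [h4, h5] at h2
    exact h2



private lemma aux_inner_tangent {d : ℕ} {p : ℝ} (hp : 1 < p) (a b : Vec d) :
    ‖a‖ ^ p + p * ‖a‖ ^ (p - 2) * ⟪a, b - a⟫ ≤ ‖b‖ ^ p := by
  rcases eq_or_ne a 0 with rfl | ha
  · simp only [norm_zero, inner_zero_left, mul_zero, add_zero]
    rw [Real.zero_rpow (by linarith : p ≠ 0)]
    exact Real.rpow_nonneg (norm_nonneg b) p
  · have hna : (0:ℝ) < ‖a‖ := norm_pos_iff.2 ha
    have e1 : ‖a‖ ^ (p - 2) * ‖a‖ = ‖a‖ ^ (p - 1) := by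
      rw [← Real.rpow_add_one hna.ne' (p - 2)]; ring_nf
    have e2 : ‖a‖ ^ (p - 1) * ‖a‖ = ‖a‖ ^ p := by
      rw [← Real.rpow_add_one hna.ne' (p - 1)]; ring_nf
    have hinner : ⟪a, b - a⟫ = ⟪a, b⟫ - ‖a‖ * ‖a‖ := by
      rw [inner_sub_right, real_inner_self_eq_norm_mul_norm]
    have hcs : ⟪a, b⟫ ≤ ‖a‖ * ‖b‖ := real_inner_le_norm a b
    have hcoef : (0:ℝ) ≤ p * ‖a‖ ^ (p - 2) := by
      have := Real.rpow_nonneg hna.le (p - 2); nlinarith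
    have step : p * ‖a‖ ^ (p - 2) * ⟪a, b - a⟫ ≤ p * ‖a‖ ^ (p - 1) * (‖b‖ - ‖a‖) := by
      rw [hinner]
      have h1 : p * ‖a‖ ^ (p - 2) * (⟪a, b⟫ - ‖a‖ * ‖a‖) ≤
          p * ‖a‖ ^ (p - 2) * (‖a‖ * ‖b‖ - ‖a‖ * ‖a‖) := by
        apply mul_le_mul_of_nonneg_left _ hcoef
        linarith
      calc p * ‖a‖ ^ (p - 2) * (⟪a, b⟫ - ‖a‖ * ‖a‖)
          ≤ p * ‖a‖ ^ (p - 2) * (‖a‖ * ‖b‖ - ‖a‖ * ‖a‖) := h1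
        _ = p * ‖a‖ ^ (p - 1) * (‖b‖ - ‖a‖) := by rw [← e1]; ring
    have := aux_rpow_tangent hp hna.le (norm_nonneg b) (t := ‖b‖) (s := ‖a‖)
    linarith

private lemma aux_subgrad {d : ℕ} {Ξ : Set (Vec d)} (hΞconv : Convex ℝ Ξ)
    {ℓ : Vec d → ℝ} (hconc : ConcaveOn ℝ Ξ ℓ)
    {x g : Vec d} (hx : x ∈ Ξ) (hgrad : HasGradientWithinAt ℓ g Ξ x)
    {y : Vec d} (hy : y ∈ Ξ) :
    ℓ y ≤ ℓ x + ⟪g, y - x⟫ := by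
  set c : ℝ → Vec d := fun t => x + t • (y - x) with hc
  have hmem : ∀ t ∈ Icc (0:ℝ) 1, c t ∈ Ξ := by
    intro t ht
    have := hΞconv hx hy (by linarith [ht.1, ht.2] : (0:ℝ) ≤ 1 - t) ht.1 (by ring)
    convert this using 1
    simp only [hc]
    module
  have hc0 : c 0 = x := by simp [hc]
  have hcd : HasDerivWithinAt c (y - x) (Icc (0:ℝ) 1) 0 := by
    have : HasDerivAt c ((1:ℝ) • (y - x)) 0 :=
      ((hasDerivAt_id (0:ℝ)).smul_const (y - x)).const_add x
    simpa using this.hasDerivWithinAt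
  have hcomp : HasDerivWithinAt (fun t => ℓ (c t)) ⟪g, y - x⟫ (Icc (0:ℝ) 1) 0 := by
    have h1 : HasDerivWithinAt (ℓ ∘ c)
        ((InnerProductSpace.toDual ℝ (Vec d) g) (y - x)) (Icc (0:ℝ) 1) 0 := by
      apply HasFDerivWithinAt.comp_hasDerivWithinAt (t := Ξ)
      · rw [hc0]; exact hgrad
      · exact hcd
      · exact hmem
    rw [InnerProductSpace.toDual_apply_apply] at h1
    exact h1
  rw [hasDerivWithinAt_iff_tendsto_slope, Icc_diff_left] at hcomp
  have hslope : ∀ t ∈ Ioc (0:ℝ) 1, ℓ y - ℓ x ≤ slope (fun t => ℓ (c t)) 0 t := by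
    intro t ht
    have hconcave := hconc.2 hx hy (by linarith [ht.2] : (0:ℝ) ≤ 1 - t) ht.1.le (by ring)
    have hct : (1 - t) • x + t • y = c t := by simp only [hc]; module
    rw [hct] at hconcave
    rw [slope_def_field, hc0, sub_zero, le_div_iff₀ ht.1]
    simp only [smul_eq_mul] at hconcave
    nlinarith [hconcave]
  have hne : (𝓝[Ioc (0:ℝ) 1] 0).NeBot := left_nhdsWithin_Ioc_neBot zero_lt_one
  have := ge_of_tendsto hcomp (eventually_nhdsWithin_of_forall hslope)
  linarith

private lemma aux_opt {d : ℕ} {Ξ : Set (Vec d)} (hΞconv : Convex ℝ Ξ)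
    {p lam : ℝ} (hp : 1 < p) (hlam : 0 < lam)
    {ℓ : Vec d → ℝ} (hconc : ConcaveOn ℝ Ξ ℓ)
    {ξ zs : Vec d} (hξ : ξ ∈ Ξ) (hzs : zs ∈ Ξ)
    (hmax : ∀ z ∈ Ξ, ℓ z - lam * ‖z - ξ‖ ^ p ≤ ℓ zs - lam * ‖zs - ξ‖ ^ p) :
    lam * p * ‖zs - ξ‖ ^ p ≤ ℓ zs - ℓ ξ := by
  rcases eq_or_ne zs ξ with rfl | hne
  · simp [Real.zero_rpow (by linarith : p ≠ 0)]
  · set r : ℝ := ‖zs - ξ‖ with hrdef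
    have hr : 0 < r := norm_pos_iff.2 (sub_ne_zero.2 hne)
    set ψ : ℝ → ℝ := fun t => (1 - t) ^ p with hψ
    have hψd : HasDerivAt ψ (-p) 0 := by
      have h1 : HasDerivAt (fun u : ℝ => u ^ p) (p * (1:ℝ) ^ (p - 1)) 1 :=
        Real.hasDerivAt_rpow_const (Or.inl one_ne_zero)
      have h2 : HasDerivAt (fun t : ℝ => 1 - t) (-1) 0 := by
        simpa using (hasDerivAt_id (0:ℝ)).const_sub 1
      have h3 := HasDerivAt.comp (0:ℝ) (by simpa using h1) h2
      simp [Real.one_rpow] at h3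
      exact h3
    have hψs : Tendsto (slope ψ 0) (𝓝[Ioc (0:ℝ) 1] 0) (𝓝 (-p)) := by
      have := (hψd.hasDerivWithinAt (s := Ioc (0:ℝ) 1))
      rwa [hasDerivWithinAt_iff_tendsto_slope' (by simp : (0:ℝ) ∉ Ioc (0:ℝ) 1)] at this
    have hten : Tendsto (fun t => lam * r ^ p * slope ψ 0 t) (𝓝[Ioc (0:ℝ) 1] 0)
        (𝓝 (lam * r ^ p * (-p))) := hψs.const_mul _
    have hne2 : (𝓝[Ioc (0:ℝ) 1] 0).NeBot := left_nhdsWithin_Ioc_neBot zero_lt_one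
    have hbd : ∀ t ∈ Ioc (0:ℝ) 1, ℓ ξ - ℓ zs ≤ lam * r ^ p * slope ψ 0 t := by
      intro t ht
      set zt : Vec d := zs + t • (ξ - zs) with hzt
      have hztΞ : zt ∈ Ξ := by
        have := hΞconv hzs hξ (by linarith [ht.2] : (0:ℝ) ≤ 1 - t) ht.1.le (by ring)
        convert this using 1
        simp only [hzt]; module
      have hnorm : ‖zt - ξ‖ = (1 - t) * r := by
        have h1 : zt - ξ = (1 - t) • (zs - ξ) := by simp only [hzt]; module
        rw [h1, norm_smul, Real.norm_eq_abs, abs_of_nonneg (by linarith [ht.2])]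
      have hmaxt := hmax zt hztΞ
      have hconcave := hconc.2 hzs hξ (by linarith [ht.2] : (0:ℝ) ≤ 1 - t) ht.1.le (by ring)
      have hct : (1 - t) • zs + t • ξ = zt := by simp only [hzt]; module
      rw [hct] at hconcave
      simp only [smul_eq_mul] at hconcave
      have hrpow : ‖zt - ξ‖ ^ p = (1 - t) ^ p * r ^ p := by
        rw [hnorm, Real.mul_rpow (by linarith [ht.2]) hr.le]
      rw [hrpow] at hmaxt
      have hslope : slope ψ 0 t = ((1 - t) ^ p - 1) / t := by
        rw [slope_def_field]; simp [hψ]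
      rw [hslope, mul_div_assoc', le_div_iff₀ ht.1]
      nlinarith [hmaxt, hconcave]
    have := ge_of_tendsto hten (eventually_nhdsWithin_of_forall hbd)
    nlinarith [this]



private lemma aux_phi_cont {d : ℕ} {p : ℝ} (hp : 1 < p) :
    Continuous (fun w : Vec d => ‖w‖ ^ (p - 2) • w) := by
  rw [continuous_iff_continuousAt]
  intro w₀
  rcases eq_or_ne w₀ 0 with rfl | hw
  · have hbd : ∀ w : Vec d, ‖‖w‖ ^ (p - 2) • w‖ ≤ ‖w‖ ^ (p - 1) := by
      intro w
      rcases eq_or_ne w 0 with rfl | hw0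
      · simp [Real.zero_rpow (by intro h; apply absurd h; intro h'; linarith [sub_eq_zero.1 h'] :
          p - 1 ≠ 0)]
      · have hn : (0:ℝ) < ‖w‖ := norm_pos_iff.2 hw0
        rw [norm_smul, Real.norm_eq_abs, abs_of_nonneg (Real.rpow_nonneg hn.le _),
          ← Real.rpow_add_one hn.ne' (p - 2)]
        ring_nf
        exact le_refl _
    have hlim : Tendsto (fun w : Vec d => ‖w‖ ^ (p - 1)) (𝓝 0) (𝓝 0) := by
      have h1 : Tendsto (fun t : ℝ => t ^ (p - 1)) (𝓝 0) (𝓝 ((0:ℝ) ^ (p - 1))) :=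
        (Real.continuousAt_rpow_const 0 (p - 1) (Or.inr (by linarith))).tendsto
      rw [Real.zero_rpow (by intro h; apply absurd h; intro h'; linarith [sub_eq_zero.1 h'] :
          p - 1 ≠ 0)] at h1
      exact h1.comp tendsto_norm_zero
    have := squeeze_zero_norm hbd hlim
    simpa [ContinuousAt] using this
  · exact (((Real.continuousAt_rpow_const _ _
      (Or.inl (norm_ne_zero_iff.2 hw))).comp continuous_norm.continuousAt).smul continuousAt_id)

private lemma aux_exists {d : ℕ} {Ξ : Set (Vec d)} (hΞclosed : IsClosed Ξ)
    {p lam : ℝ} (hp : 1 < p) (hlam : 0 < lam)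
    {ℓ : Vec d → ℝ} (hcont : ContinuousOn ℓ Ξ)
    {ξ : Vec d} (hξ : ξ ∈ Ξ) {C : ℝ} (hC : 0 ≤ C)
    (hbound : ∀ z ∈ Ξ, ℓ z ≤ ℓ ξ + C * ‖z - ξ‖)
    {R : ℝ} (hR1 : 1 ≤ R)
    (hRbig : ∀ s : ℝ, R ≤ s → C * (s + 1) + lam < lam * s ^ p)
    {x : Vec d} (hx : x ∈ Ξ) (hx1 : ‖x - ξ‖ ≤ 1) :
    ∃ zs ∈ Ξ, ‖zs - x‖ ≤ R ∧
      ∀ z ∈ Ξ, ℓ z - lam * ‖z - x‖ ^ p ≤ ℓ zs - lam * ‖zs - x‖ ^ p := by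
  have hp0 : (0:ℝ) < p := by linarith
  set K : Set (Vec d) := Ξ ∩ closedBall x R with hK
  have hKc : IsCompact K := (isCompact_closedBall x R).inter_left hΞclosed
  have hxK : x ∈ K := ⟨hx, mem_closedBall_self (by linarith)⟩
  have hgc : ContinuousOn (fun z => ℓ z - lam * ‖z - x‖ ^ p) K := by
    apply (hcont.mono inter_subset_left).sub
    apply Continuous.continuousOn
    exact continuous_const.mul ((continuous_id.sub continuous_const).norm.rpow_const
      (fun _ => Or.inr hp0.le))
  obtain ⟨zs, hzsK, hmaxK⟩ := hKc.exists_isMaxOn ⟨x, hxK⟩ hgc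
  have hξK : ξ ∈ K := ⟨hξ, by
    rw [mem_closedBall, dist_eq_norm, ← norm_sub_rev]; linarith⟩
  have hξval : ℓ ξ - lam ≤ ℓ ξ - lam * ‖ξ - x‖ ^ p := by
    have h1 : ‖ξ - x‖ ^ p ≤ 1 :=
      Real.rpow_le_one (norm_nonneg _) (by rw [norm_sub_rev]; exact hx1) hp0.le
    nlinarith
  refine ⟨zs, hzsK.1, by simpa [dist_eq_norm] using hzsK.2, ?_⟩
  intro z hz
  by_cases hzK : z ∈ closedBall x R
  · exact hmaxK ⟨hz, hzK⟩
  · have hs : R < ‖z - x‖ := by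
      rw [mem_closedBall, dist_eq_norm, not_le] at hzK; exact hzK
    have hzb : ℓ z ≤ ℓ ξ + C * (‖z - x‖ + 1) := by
      have h1 := hbound z hz
      have h2 : ‖z - ξ‖ ≤ ‖z - x‖ + 1 := by
        have := norm_add_le (z - x) (x - ξ)
        simp only [sub_add_sub_cancel] at this
        linarith
      nlinarith
    have hbig := hRbig ‖z - x‖ hs.le
    have h3 : ℓ z - lam * ‖z - x‖ ^ p < ℓ ξ - lam := by nlinarith
    have h4 : ℓ ξ - lam * ‖ξ - x‖ ^ p ≤ ℓ zs - lam * ‖zs - x‖ ^ p := hmaxK hξK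
    linarith



private lemma aux_unique {d : ℕ} {Ξ : Set (Vec d)} (hΞconv : Convex ℝ Ξ)
    {p lam : ℝ} (hp : 1 < p) (hlam : 0 < lam)
    {ℓ : Vec d → ℝ} (hconc : ConcaveOn ℝ Ξ ℓ)
    {x z1 z2 : Vec d} (h1 : z1 ∈ Ξ) (h2 : z2 ∈ Ξ)
    (hm1 : ∀ z ∈ Ξ, ℓ z - lam * ‖z - x‖ ^ p ≤ ℓ z1 - lam * ‖z1 - x‖ ^ p)
    (hm2 : ∀ z ∈ Ξ, ℓ z - lam * ‖z - x‖ ^ p ≤ ℓ z2 - lam * ‖z2 - x‖ ^ p) :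
    z1 = z2 := by
  by_contra hne
  have hp0 : (0:ℝ) < p := by linarith
  set m : Vec d := (1/2 : ℝ) • z1 + (1/2 : ℝ) • z2 with hm
  have hmΞ : m ∈ Ξ := hΞconv h1 h2 (by norm_num) (by norm_num) (by norm_num)
  have hmx : m - x = (1/2 : ℝ) • ((z1 - x) + (z2 - x)) := by simp only [hm]; module
  set a : Vec d := z1 - x with ha
  set b : Vec d := z2 - x with hb
  have hab : a ≠ b := fun h => hne (by
    have := h; rw [ha, hb, sub_left_inj] at this; exact this)
  have key : ‖m - x‖ ^ p < (‖a‖ ^ p + ‖b‖ ^ p) / 2 := by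
    rcases eq_or_ne ‖a‖ ‖b‖ with hr | hr
    · have hr0 : 0 < ‖a‖ := by
        rcases eq_or_lt_of_le (norm_nonneg a) with h0 | h0
        · exfalso
          apply hab
          have ha0 : a = 0 := norm_eq_zero.1 h0.symm
          have hb0 : b = 0 := norm_eq_zero.1 (by rw [← hr, ← h0])
          rw [ha0, hb0]
        · exact h0
      have hray : ¬ SameRay ℝ a b := by
        intro hs
        rw [sameRay_iff_norm_smul_eq] at hs
        rw [← hr] at hs
        exact hab (smul_right_injective (Vec d) hr0.ne' hs).symm
      have hlt : ‖a + b‖ < ‖a‖ + ‖b‖ := norm_add_lt_of_not_sameRay hray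
      have hmn : ‖m - x‖ < ‖a‖ := by
        rw [hmx, norm_smul]
        simp only [Real.norm_eq_abs]
        rw [abs_of_nonneg (by norm_num : (0:ℝ) ≤ 1/2)]
        rw [← hr] at hlt
        linarith
      have := Real.rpow_lt_rpow (norm_nonneg _) hmn hp0
      rw [← hr]
      linarith
    · have hmid : ‖m - x‖ ≤ (1/2) * ‖a‖ + (1/2) * ‖b‖ := by
        rw [hmx, norm_smul]
        simp only [Real.norm_eq_abs]
        rw [abs_of_nonneg (by norm_num : (0:ℝ) ≤ 1/2)]
        have := norm_add_le a b
        linarith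
      have hsc := (strictConvexOn_rpow hp).2 (mem_Ici.2 (norm_nonneg a))
        (mem_Ici.2 (norm_nonneg b)) hr (by norm_num : (0:ℝ) < 1/2)
        (by norm_num : (0:ℝ) < 1/2) (by norm_num)
      simp only [smul_eq_mul] at hsc
      have hmono : ‖m - x‖ ^ p ≤ ((1/2) * ‖a‖ + (1/2) * ‖b‖) ^ p :=
        Real.rpow_le_rpow (norm_nonneg _) hmid hp0.le
      linarith
  have e12 : ℓ z1 - lam * ‖z1 - x‖ ^ p = ℓ z2 - lam * ‖z2 - x‖ ^ p :=
    le_antisymm (hm2 z1 h1) (hm1 z2 h2)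
  have hconcave := hconc.2 h1 h2 (by norm_num : (0:ℝ) ≤ 1/2) (by norm_num : (0:ℝ) ≤ 1/2)
    (by norm_num)
  have hmval : (1/2 : ℝ) • ℓ z1 + (1/2 : ℝ) • ℓ z2 ≤ ℓ m := hconcave
  simp only [smul_eq_mul] at hmval
  have hfin := hm1 m hmΞ
  have e12' : ℓ z1 - lam * ‖a‖ ^ p = ℓ z2 - lam * ‖b‖ ^ p := e12
  have hfin' : ℓ m - lam * ‖m - x‖ ^ p ≤ ℓ z1 - lam * ‖a‖ ^ p := hfin
  nlinarith [hmval, hfin', e12', key, hlam]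



private lemma aux_env_eq {d : ℕ} {Ξ : Set (Vec d)} {ℓ : Vec d → ℝ} {p lam : ℝ}
    {x zx : Vec d} (hzx : zx ∈ Ξ)
    (hmax : ∀ z ∈ Ξ, ℓ z - lam * ‖z - x‖ ^ p ≤ ℓ zx - lam * ‖zx - x‖ ^ p) :
    env Ξ ℓ p lam x = ℓ zx - lam * ‖zx - x‖ ^ p := by
  unfold env
  apply le_antisymm
  · have hne : {y | ∃ z ∈ Ξ, y = ℓ z - lam * ‖z - x‖ ^ p}.Nonempty :=
      ⟨ℓ zx - lam * ‖zx - x‖ ^ p, ⟨zx, hzx, rfl⟩⟩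
    apply csSup_le hne
    rintro y ⟨z, hz, rfl⟩
    exact hmax z hz
  · exact le_csSup ⟨_, by rintro y ⟨z, hz, rfl⟩; exact hmax z hz⟩ ⟨zx, hzx, rfl⟩

private lemma aux_env_ge {d : ℕ} {Ξ : Set (Vec d)} {ℓ : Vec d → ℝ} {p lam : ℝ}
    {x zx : Vec d} (hzx : zx ∈ Ξ)
    (hmax : ∀ z ∈ Ξ, ℓ z - lam * ‖z - x‖ ^ p ≤ ℓ zx - lam * ‖zx - x‖ ^ p)
    {w : Vec d} (hw : w ∈ Ξ) :
    ℓ w - lam * ‖w - x‖ ^ p ≤ env Ξ ℓ p lam x := by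
  unfold env
  exact le_csSup ⟨_, by rintro y ⟨z, hz, rfl⟩; exact hmax z hz⟩ ⟨w, hw, rfl⟩


set_option maxHeartbeats 1600000 in

/-- **Gradient bound for the Moreau-type envelope when `p > 1`** (Lemma 9).  For `p > 1`,
`λ > 0` and a concave differentiable `ℓ_k` with sublinear growth relative to `‖z − ξ‖^p`,
the supremum defining the envelope is attained at a unique point `z*`, the envelope is
differentiable in `ξ` with gradient `λ p ‖z* − ξ‖^{p−2} (z* − ξ)`, and the norm of this
gradient is at most `‖∇ℓ_k(ξ)‖`. -/
theorem envelope_gradient_bound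
    {d : ℕ} (Ξ : Set (Vec d)) (hΞne : Ξ.Nonempty) (hΞclosed : IsClosed Ξ)
    (hΞconv : Convex ℝ Ξ)
    (p lam : ℝ) (hp : 1 < p) (hlam : 0 < lam)
    (ℓ : Vec d → ℝ) (hconc : ConcaveOn ℝ Ξ ℓ)
    (gradℓ : Vec d → Vec d)
    (hdiff : ∀ ξ ∈ Ξ, HasGradientWithinAt ℓ (gradℓ ξ) Ξ ξ)
    (hcoer : ∀ ξ ∈ Ξ,
      limsup (fun z : Vec d => ℓ z / ‖z - ξ‖ ^ p)
        ((Filter.comap (fun z : Vec d => ‖z‖) Filter.atTop) ⊓ Filter.principal Ξ) ≤ 0) :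
    ∀ ξ ∈ Ξ, ∃ zs : Vec d,
      (zs ∈ Ξ ∧ ∀ z ∈ Ξ, ℓ z - lam * ‖z - ξ‖ ^ p ≤ ℓ zs - lam * ‖zs - ξ‖ ^ p) ∧
      (∀ z' : Vec d,
        (z' ∈ Ξ ∧ ∀ z ∈ Ξ, ℓ z - lam * ‖z - ξ‖ ^ p ≤ ℓ z' - lam * ‖z' - ξ‖ ^ p) → z' = zs) ∧
      HasGradientWithinAt (env Ξ ℓ p lam)
        ((lam * p * ‖zs - ξ‖ ^ (p - 2)) • (zs - ξ)) Ξ ξ ∧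
      ‖(lam * p * ‖zs - ξ‖ ^ (p - 2)) • (zs - ξ)‖ ≤ ‖gradℓ ξ‖ := by
  intro ξ hξ
  have hp0 : (0:ℝ) < p := by linarith
  have hcont : ContinuousOn ℓ Ξ := by
    intro x hx
    have h : HasFDerivWithinAt ℓ (InnerProductSpace.toDual ℝ (Vec d) (gradℓ x)) Ξ x := hdiff x hx
    exact h.continuousWithinAt
  set C := ‖gradℓ ξ‖ with hC
  have hC0 : 0 ≤ C := norm_nonneg _
  have hbound : ∀ z ∈ Ξ, ℓ z ≤ ℓ ξ + C * ‖z - ξ‖ := by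
    intro z hz
    have h1 := aux_subgrad hΞconv hconc hξ (hdiff ξ hξ) hz
    have h2 : ⟪gradℓ ξ, z - ξ⟫ ≤ C * ‖z - ξ‖ := real_inner_le_norm _ _
    linarith
  set R : ℝ := max 1 (((2*C + lam + 1)/lam) ^ (p-1)⁻¹) with hR
  have hR1 : 1 ≤ R := le_max_left _ _
  have hRbig : ∀ s : ℝ, R ≤ s → C * (s + 1) + lam < lam * s ^ p := by
    intro s hs
    have hs1 : (1:ℝ) ≤ s := le_trans hR1 hs
    have hs0 : (0:ℝ) < s := by linarith
    have hq : ((2*C + lam + 1)/lam) ^ (p-1)⁻¹ ≤ R := le_max_right _ _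
    have hp1 : (0:ℝ) < p - 1 := by linarith
    have h1 : (2*C + lam + 1)/lam ≤ s ^ (p-1) := by
      calc (2*C + lam + 1)/lam = (((2*C + lam + 1)/lam) ^ (p-1)⁻¹) ^ (p-1) := by
            rw [Real.rpow_inv_rpow (by positivity) hp1.ne']
      _ ≤ R ^ (p-1) := Real.rpow_le_rpow (by positivity) hq hp1.le
      _ ≤ s ^ (p-1) := Real.rpow_le_rpow (by linarith) hs hp1.le
    have h2 : 2*C + lam + 1 ≤ lam * s ^ (p-1) := by
      rw [div_le_iff₀ hlam] at h1; linarith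
    have h3 : s ^ p = s ^ (p-1) * s := by
      rw [← Real.rpow_add_one hs0.ne' (p-1)]; ring_nf
    have h4 : (2*C + lam + 1) * s ≤ lam * s ^ p := by
      rw [h3, ← mul_assoc]
      exact mul_le_mul_of_nonneg_right h2 hs0.le
    nlinarith
  have hex : ∀ x ∈ Ξ, ‖x - ξ‖ ≤ 1 → ∃ zs ∈ Ξ, ‖zs - x‖ ≤ R ∧
      ∀ z ∈ Ξ, ℓ z - lam * ‖z - x‖ ^ p ≤ ℓ zs - lam * ‖zs - x‖ ^ p :=
    fun x hx hx1 => aux_exists hΞclosed hp hlam hcont hξ hC0 hbound hR1 hRbig hx hx1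
  obtain ⟨zs, hzsΞ, hzsR, hmax⟩ := hex ξ hξ (by simp)
  have huniq : ∀ z' ∈ Ξ, (∀ z ∈ Ξ, ℓ z - lam * ‖z - ξ‖ ^ p ≤ ℓ z' - lam * ‖z' - ξ‖ ^ p)
      → z' = zs := fun z' h1 h2 => aux_unique hΞconv hp hlam hconc h1 hzsΞ h2 hmax
  -- any maximizer at a nearby basepoint stays in a ball
  have hmaxball : ∀ x ∈ Ξ, ‖x - ξ‖ ≤ 1 → ∀ zx ∈ Ξ,
      (∀ z ∈ Ξ, ℓ z - lam * ‖z - x‖ ^ p ≤ ℓ zx - lam * ‖zx - x‖ ^ p) → ‖zx - x‖ ≤ R := by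
    intro x hx hx1 zx hzx hmx
    by_contra hcon
    push_neg at hcon
    have hzb : ℓ zx ≤ ℓ ξ + C * (‖zx - x‖ + 1) := by
      have h1 := hbound zx hzx
      have h2 : ‖zx - ξ‖ ≤ ‖zx - x‖ + 1 := by
        have := norm_add_le (zx - x) (x - ξ)
        simp only [sub_add_sub_cancel] at this
        linarith
      nlinarith
    have hbig := hRbig ‖zx - x‖ hcon.le
    have h3 : ℓ zx - lam * ‖zx - x‖ ^ p < ℓ ξ - lam := by nlinarith
    have h4 : ℓ ξ - lam ≤ ℓ ξ - lam * ‖ξ - x‖ ^ p := by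
      have h5 : ‖ξ - x‖ ^ p ≤ 1 :=
        Real.rpow_le_one (norm_nonneg _) (by rw [norm_sub_rev]; exact hx1) hp0.le
      nlinarith
    have h6 := hmx ξ hξ
    linarith
  -- stability of maximizers
  have hstab : ∀ ε > (0:ℝ), ∃ δ > (0:ℝ), δ ≤ 1 ∧ ∀ x ∈ Ξ, ‖x - ξ‖ < δ → ∀ zx ∈ Ξ,
      (∀ z ∈ Ξ, ℓ z - lam * ‖z - x‖ ^ p ≤ ℓ zx - lam * ‖zx - x‖ ^ p) → ‖zx - zs‖ < ε := by
    intro ε hε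
    by_contra hcon
    push_neg at hcon
    have hseq : ∀ n : ℕ, ∃ x, x ∈ Ξ ∧ ‖x - ξ‖ < 1/((n:ℝ)+1) ∧ ∃ zx, zx ∈ Ξ ∧
        (∀ z ∈ Ξ, ℓ z - lam * ‖z - x‖ ^ p ≤ ℓ zx - lam * ‖zx - x‖ ^ p) ∧
        ε ≤ ‖zx - zs‖ := by
      intro n
      have hδ : (0:ℝ) < min (1/((n:ℝ)+1)) 1 := by positivity
      obtain ⟨x, hx, hxd, zx, hzx, hmx, hfar⟩ := hcon (min (1/((n:ℝ)+1)) 1) hδ (min_le_right _ _)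
      exact ⟨x, hx, lt_of_lt_of_le hxd (min_le_left _ _), zx, hzx, hmx, hfar⟩
    choose xs hxsΞ hxsd zq hzqΞ hzqmax hzqfar using hseq
    have hxs1 : ∀ n, ‖xs n - ξ‖ ≤ 1 := by
      intro n
      have h1 : (1:ℝ)/((n:ℝ)+1) ≤ 1 := by
        rw [div_le_one (by positivity)]
        simp [le_add_of_nonneg_left]
      exact le_trans (hxsd n).le h1
    have hzqball : ∀ n, zq n ∈ closedBall ξ (R + 1) := by
      intro n
      have h1 : ‖zq n - xs n‖ ≤ R := hmaxball (xs n) (hxsΞ n) (hxs1 n) (zq n) (hzqΞ n) (hzqmax n)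
      rw [mem_closedBall, dist_eq_norm]
      have := norm_add_le (zq n - xs n) (xs n - ξ)
      simp only [sub_add_sub_cancel] at this
      linarith [hxs1 n]
    obtain ⟨zl, hzlball, φ, hφ, hzconv⟩ := (isCompact_closedBall ξ (R+1)).tendsto_subseq hzqball
    have hxs_lim : Tendsto xs atTop (𝓝 ξ) := by
      rw [tendsto_iff_norm_sub_tendsto_zero]
      apply squeeze_zero (fun n => norm_nonneg _) (fun n => (hxsd n).le)
      exact tendsto_one_div_add_atTop_nhds_zero_nat
    have hxφ : Tendsto (fun n => xs (φ n)) atTop (𝓝 ξ) := hxs_lim.comp hφ.tendsto_atTop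
    have hzlΞ : zl ∈ Ξ :=
      hΞclosed.mem_of_tendsto hzconv (Eventually.of_forall (fun n => hzqΞ (φ n)))
    have hzlmax : ∀ w ∈ Ξ, ℓ w - lam * ‖w - ξ‖ ^ p ≤ ℓ zl - lam * ‖zl - ξ‖ ^ p := by
      intro w hw
      have hLHS : Tendsto (fun n => ℓ w - lam * ‖w - xs (φ n)‖ ^ p) atTop
          (𝓝 (ℓ w - lam * ‖w - ξ‖ ^ p)) := by
        exact ((((tendsto_const_nhds (x := w)).sub hxφ).norm.rpow_const
          (Or.inr hp0.le)).const_mul lam).const_sub (ℓ w)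
      have hRHS : Tendsto (fun n => ℓ (zq (φ n)) - lam * ‖zq (φ n) - xs (φ n)‖ ^ p) atTop
          (𝓝 (ℓ zl - lam * ‖zl - ξ‖ ^ p)) := by
        have hA : Tendsto (fun n => ℓ (zq (φ n))) atTop (𝓝 (ℓ zl)) := by
          apply (hcont zl hzlΞ).tendsto.comp
          exact tendsto_nhdsWithin_of_tendsto_nhds_of_eventually_within _ hzconv
            (Eventually.of_forall (fun n => hzqΞ (φ n)))
        have hB : Tendsto (fun n => lam * ‖zq (φ n) - xs (φ n)‖ ^ p) atTop
            (𝓝 (lam * ‖zl - ξ‖ ^ p)) :=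
          ((hzconv.sub hxφ).norm.rpow_const (Or.inr hp0.le)).const_mul lam
        exact hA.sub hB
      exact le_of_tendsto_of_tendsto' hLHS hRHS
        (fun n => hzqmax (φ n) w hw)
    have heq : zl = zs := huniq zl hzlΞ hzlmax
    have hfar : ε ≤ ‖zl - zs‖ := by
      have h1 : Tendsto (fun n => ‖zq (φ n) - zs‖) atTop (𝓝 ‖zl - zs‖) :=
        (hzconv.sub (tendsto_const_nhds (x := zs))).norm
      exact le_of_tendsto_of_tendsto' tendsto_const_nhds h1 (fun n => hzqfar (φ n))
    rw [heq] at hfar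
    simp only [sub_self, norm_zero] at hfar
    linarith
  -- the gradient map
  set G : Vec d → Vec d := fun w => (lam * p * ‖w‖ ^ (p - 2)) • w with hG
  have hGcont : Continuous G := by
    have h1 := (aux_phi_cont (d := d) hp).const_smul (lam * p)
    convert h1 using 1
    funext w
    simp only [hG, Pi.smul_apply, smul_smul]
  -- tangent inequality
  have htan : ∀ z x y : Vec d,
      lam * ‖z - x‖ ^ p - ⟪G (z - x), y - x⟫ ≤ lam * ‖z - y‖ ^ p := by
    intro z x y
    have h1 := aux_inner_tangent hp (x - z) (y - z)
    have h2 : (y - z) - (x - z) = y - x := by abel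
    rw [h2] at h1
    have h3 : ⟪G (z - x), y - x⟫ = lam * p * ‖z - x‖ ^ (p-2) * ⟪z - x, y - x⟫ := by
      simp only [hG, real_inner_smul_left]
    have h4 : ⟪(x : Vec d) - z, y - x⟫ = - ⟪z - x, y - x⟫ := by
      rw [← inner_neg_left]
      congr 1
      abel
    have h5 : ‖x - z‖ = ‖z - x‖ := norm_sub_rev _ _
    have h6 : ‖y - z‖ = ‖z - y‖ := norm_sub_rev _ _
    rw [h4, h5, h6] at h1
    rw [h3]
    nlinarith [h1, hlam.le]
  refine ⟨zs, ⟨hzsΞ, hmax⟩, fun z' hz' => huniq z' hz'.1 hz'.2, ?_, ?_⟩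
  · -- differentiability
    show HasFDerivWithinAt (env Ξ ℓ p lam)
      (InnerProductSpace.toDual ℝ (Vec d) ((lam * p * ‖zs - ξ‖ ^ (p - 2)) • (zs - ξ))) Ξ ξ
    rw [hasFDerivWithinAt_iff_isLittleO, Asymptotics.isLittleO_iff]
    intro c hc
    have hc2 : (0:ℝ) < c/2 := by linarith
    obtain ⟨δ₁, hδ₁, hδ₁p⟩ : ∃ δ₁ > (0:ℝ), ∀ w : Vec d, ‖w - (zs - ξ)‖ < δ₁ →
        ‖G w - G (zs - ξ)‖ ≤ c/2 := by
      have := Metric.continuousAt_iff.1 (hGcont.continuousAt (x := zs - ξ)) (c/2) hc2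
      obtain ⟨δ₁, hδ₁, hδ₁p⟩ := this
      refine ⟨δ₁, hδ₁, fun w hw => ?_⟩
      have h2 := hδ₁p (show dist w (zs - ξ) < δ₁ by rwa [dist_eq_norm])
      rw [dist_eq_norm] at h2
      exact h2.le
    obtain ⟨δ₂, hδ₂, hδ₂1, hδ₂p⟩ := hstab δ₁ hδ₁
    set δ := min δ₁ δ₂ with hδdef
    have hδ : (0:ℝ) < δ := lt_min hδ₁ hδ₂
    filter_upwards [self_mem_nhdsWithin,
      mem_nhdsWithin_of_mem_nhds (Metric.ball_mem_nhds ξ hδ)] with x hxΞ hxball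
    rw [mem_ball, dist_eq_norm] at hxball
    have hxd1 : ‖x - ξ‖ < δ₁ := lt_of_lt_of_le hxball (min_le_left _ _)
    have hxd2 : ‖x - ξ‖ < δ₂ := lt_of_lt_of_le hxball (min_le_right _ _)
    obtain ⟨zx, hzxΞ, hzxR, hzxmax⟩ := hex x hxΞ (le_trans hxd2.le hδ₂1)
    have henvx : env Ξ ℓ p lam x = ℓ zx - lam * ‖zx - x‖ ^ p := aux_env_eq hzxΞ hzxmax
    have henvξ : env Ξ ℓ p lam ξ = ℓ zs - lam * ‖zs - ξ‖ ^ p := aux_env_eq hzsΞ hmax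
    have hzxnear : ‖zx - zs‖ < δ₁ := hδ₂p x hxΞ hxd2 zx hzxΞ hzxmax
    -- lower bound
    have hlow : ⟪G (zs - x), x - ξ⟫ ≤ env Ξ ℓ p lam x - env Ξ ℓ p lam ξ := by
      have h1 : ℓ zs - lam * ‖zs - x‖ ^ p ≤ env Ξ ℓ p lam x := aux_env_ge hzxΞ hzxmax hzsΞ
      have h2 := htan zs x ξ
      have h3 : ⟪G (zs - x), (ξ : Vec d) - x⟫ = - ⟪G (zs - x), x - ξ⟫ := by
        rw [← inner_neg_right]; congr 1; abel
      rw [h3] at h2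
      rw [henvξ]
      linarith
    -- upper bound
    have hup : env Ξ ℓ p lam x - env Ξ ℓ p lam ξ ≤ ⟪G (zx - ξ), x - ξ⟫ := by
      have h1 : ℓ zx - lam * ‖zx - ξ‖ ^ p ≤ env Ξ ℓ p lam ξ := aux_env_ge hzsΞ hmax hzxΞ
      have h2 := htan zx ξ x
      rw [henvx]
      linarith
    have hv : (lam * p * ‖zs - ξ‖ ^ (p - 2)) • (zs - ξ) = G (zs - ξ) := rfl
    rw [hv]
    rw [InnerProductSpace.toDual_apply_apply]
    have hb1 : ‖G (zs - x) - G (zs - ξ)‖ ≤ c/2 := by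
      apply hδ₁p
      have h : (zs - x) - (zs - ξ) = ξ - x := by abel
      rw [h, norm_sub_rev]
      exact hxd1
    have hb2 : ‖G (zx - ξ) - G (zs - ξ)‖ ≤ c/2 := by
      apply hδ₁p
      have h : (zx - ξ) - (zs - ξ) = zx - zs := by abel
      rw [h]
      exact hzxnear
    have hup2 : env Ξ ℓ p lam x - env Ξ ℓ p lam ξ - ⟪G (zs - ξ), x - ξ⟫ ≤ (c/2) * ‖x - ξ‖ := by
      have h1 : ⟪G (zx - ξ), x - ξ⟫ - ⟪G (zs - ξ), x - ξ⟫ = ⟪G (zx - ξ) - G (zs - ξ), x - ξ⟫ := by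
        rw [inner_sub_left]
      have h2 : ⟪G (zx - ξ) - G (zs - ξ), x - ξ⟫ ≤ ‖G (zx - ξ) - G (zs - ξ)‖ * ‖x - ξ‖ :=
        real_inner_le_norm _ _
      have h3 : ‖G (zx - ξ) - G (zs - ξ)‖ * ‖x - ξ‖ ≤ (c/2) * ‖x - ξ‖ :=
        mul_le_mul_of_nonneg_right hb2 (norm_nonneg _)
      linarith
    have hlow2 : -((c/2) * ‖x - ξ‖) ≤ env Ξ ℓ p lam x - env Ξ ℓ p lam ξ - ⟪G (zs - ξ), x - ξ⟫ := by
      have h1 : ⟪G (zs - x), x - ξ⟫ - ⟪G (zs - ξ), x - ξ⟫ = ⟪G (zs - x) - G (zs - ξ), x - ξ⟫ := by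
        rw [inner_sub_left]
      have h2 : - (‖G (zs - x) - G (zs - ξ)‖ * ‖x - ξ‖) ≤ ⟪G (zs - x) - G (zs - ξ), x - ξ⟫ := by
        have := abs_real_inner_le_norm (G (zs - x) - G (zs - ξ)) (x - ξ)
        have h4 := neg_abs_le ⟪G (zs - x) - G (zs - ξ), x - ξ⟫
        linarith
      have h3 : ‖G (zs - x) - G (zs - ξ)‖ * ‖x - ξ‖ ≤ (c/2) * ‖x - ξ‖ :=
        mul_le_mul_of_nonneg_right hb1 (norm_nonneg _)
      linarith
    rw [Real.norm_eq_abs, abs_le]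
    constructor
    · have : -(c * ‖x - ξ‖) ≤ -((c/2) * ‖x - ξ‖) := by nlinarith [norm_nonneg (x - ξ)]
      linarith
    · have : (c/2) * ‖x - ξ‖ ≤ c * ‖x - ξ‖ := by nlinarith [norm_nonneg (x - ξ)]
      linarith
  · -- norm bound
    rcases eq_or_ne zs ξ with rfl | hne
    · simpa using hC0
    · set r : ℝ := ‖zs - ξ‖ with hrdef
      have hr : 0 < r := norm_pos_iff.2 (sub_ne_zero.2 hne)
      have hopt := aux_opt hΞconv hp hlam hconc hξ hzsΞ hmax
      have hsub := aux_subgrad hΞconv hconc hξ (hdiff ξ hξ) hzsΞ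
      have hcs : ⟪gradℓ ξ, zs - ξ⟫ ≤ C * r := real_inner_le_norm _ _
      have e1 : r ^ (p - 2) * r = r ^ (p - 1) := by
        rw [← Real.rpow_add_one hr.ne' (p - 2)]; ring_nf
      have e2 : r ^ (p - 1) * r = r ^ p := by
        rw [← Real.rpow_add_one hr.ne' (p - 1)]; ring_nf
      have hnorm : ‖(lam * p * r ^ (p - 2)) • (zs - ξ)‖ = lam * p * r ^ (p - 1) := by
        rw [norm_smul, Real.norm_eq_abs, abs_of_nonneg (by positivity), ← hrdef, mul_assoc, e1]
      rw [hnorm]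
      have hfin : lam * p * r ^ (p - 1) * r ≤ C * r := by
        calc lam * p * r ^ (p - 1) * r = lam * p * r ^ p := by rw [mul_assoc, e2]
        _ ≤ ℓ zs - ℓ ξ := hopt
        _ ≤ ⟪gradℓ ξ, zs - ξ⟫ := by linarith
        _ ≤ C * r := hcs
      exact le_of_mul_le_mul_right hfin hr
end
end

section
/- Equivalence of the perspective and budget formulations of the per-sample subproblem: Fix b ≥ 0 and i ∈ [t]. Under the piecewise-concavity and sublinear-growth assumptions, S_i^{old}(b) = S_i^{new}(b), where S_i^{old}(b) := sup { Σ_{k=1}^K α_k ℓ_k(ξ̂_i − q_k/α_k) : Σ_{k=1}^K ‖q_k‖ ≤ b, Σ_{k=1}^K α_k = 1, α_k ≥ 0 } (with the liminf convention at α_k = 0) and S_i^{new}(b) := sup { Σ_{k=1}^K α_k ℓ_k(ξ̂_i − v_k) : Σ_{k=1}^K α_k ‖v_k‖ ≤ b, Σ_{k=1}^K α_k = 1, α_k ≥ 0 }. -/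
open MeasureTheory Filter
open scoped ENNReal NNReal BigOperators RealInnerProductSpace

set_option autoImplicit false

noncomputable section

/-- Perspective-type term `α · h(ξ − q/α)`, with the liminf convention
`liminf_{α→0⁺} α · h(ξ − q/α)` at `α = 0` (which equals `0` when `q = 0`). -/
def persp {d : ℕ} (h : Vec d → ℝ) (ξ q : Vec d) (α : ℝ) : ℝ :=
  if 0 < α then α * h (ξ - α⁻¹ • q)
  else liminf (fun a : ℝ => a * h (ξ - a⁻¹ • q)) (nhdsWithin 0 (Set.Ioi 0))

/-- The perspective formulation `S_i^{old}(b)` of the per-sample subproblem. -/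
def Sold {d K : ℕ} (ℓk : Fin K → Vec d → ℝ) (ξ : Vec d) (b : ℝ) : ℝ :=
  sSup {v | ∃ (α : Fin K → ℝ) (q : Fin K → Vec d),
    (∀ k, 0 ≤ α k) ∧ ∑ k, α k = 1 ∧ ∑ k, ‖q k‖ ≤ b ∧
    v = ∑ k, persp (ℓk k) ξ (q k) (α k)}

/-- The budget formulation `S_i^{new}(b)` of the per-sample subproblem. -/
def Snew {d K : ℕ} (ℓk : Fin K → Vec d → ℝ) (ξ : Vec d) (b : ℝ) : ℝ :=
  sSup {v | ∃ (α : Fin K → ℝ) (w : Fin K → Vec d),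
    (∀ k, 0 ≤ α k) ∧ ∑ k, α k = 1 ∧ ∑ k, α k * ‖w k‖ ≤ b ∧
    v = ∑ k, α k * ℓk k (ξ - w k)}

lemma persp_pos' {d : ℕ} {h : Vec d → ℝ} {ξ q : Vec d} {α : ℝ} (hα : 0 < α) :
    persp h ξ q α = α * h (ξ - α⁻¹ • q) := if_pos hα

lemma persp_zero' {d : ℕ} (h : Vec d → ℝ) (ξ : Vec d) :
    persp h ξ 0 0 = 0 := by
  rw [persp, if_neg (lt_irrefl 0)]
  have ht : Tendsto (fun a : ℝ => a * h (ξ - a⁻¹ • (0 : Vec d)))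
      (nhdsWithin 0 (Set.Ioi 0)) (nhds 0) := by
    simp only [smul_zero, sub_zero]
    simpa using (Filter.Tendsto.mono_left tendsto_id nhdsWithin_le_nhds :
      Tendsto (fun a : ℝ => a) (nhdsWithin 0 (Set.Ioi 0)) (nhds 0)).mul_const (h ξ)
  exact ht.liminf_eq

lemma persp_zero_nonpos' {d : ℕ} {h : Vec d → ℝ} {g r : ℝ} (hg : 0 < g)
    (hr : r ∈ Set.Ioo (0:ℝ) 1) (hgr : ∀ x, h x ≤ g * (1 + ‖x‖ ^ r))
    (ξ q : Vec d) : persp h ξ q 0 ≤ 0 := by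
  obtain ⟨hr0, hr1⟩ := hr
  rw [persp, if_neg (lt_irrefl 0), Filter.liminf_eq]
  refine Real.sSup_le (fun c hc => ?_) le_rfl
  set c₁ := ‖ξ‖; set c₂ := ‖q‖
  have hu : Tendsto (fun a : ℝ => g * (a + a ^ (1 - r) * (a * c₁ + c₂) ^ r))
      (nhdsWithin 0 (Set.Ioi 0)) (nhds 0) := by
    have h1 : Tendsto (fun a : ℝ => a ^ (1 - r)) (nhds 0) (nhds 0) := by
      have := (Real.continuousAt_rpow_const 0 (1 - r) (Or.inr (by linarith))).tendsto
      simpa [Real.zero_rpow (by linarith : (1:ℝ) - r ≠ 0)] using this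
    have h2 : Tendsto (fun a : ℝ => (a * c₁ + c₂) ^ r) (nhds 0) (nhds (c₂ ^ r)) := by
      have hbase : Tendsto (fun a : ℝ => a * c₁ + c₂) (nhds 0) (nhds c₂) := by
        have := (Filter.Tendsto.add_const c₂
          ((tendsto_id : Tendsto (fun a:ℝ => a) (nhds 0) (nhds 0)).mul_const c₁))
        simpa using this
      exact ((Real.continuousAt_rpow_const c₂ r (Or.inr hr0.le)).tendsto.comp hbase)
    have : Tendsto (fun a : ℝ => g * (a + a ^ (1 - r) * (a * c₁ + c₂) ^ r)) (nhds 0)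
        (nhds (g * (0 + 0 * c₂ ^ r))) :=
      tendsto_const_nhds.mul (tendsto_id.add (h1.mul h2))
    simpa using this.mono_left nhdsWithin_le_nhds
  have hεle : ∀ ε > (0:ℝ), c ≤ ε := by
    intro ε hε
    have hev : ∀ᶠ a in nhdsWithin (0:ℝ) (Set.Ioi 0),
        a * h (ξ - a⁻¹ • q) ≤ ε := by
      have hlt := hu.eventually_lt_const hε
      filter_upwards [hlt, self_mem_nhdsWithin] with a ha haI
      have ha0 : (0:ℝ) < a := haI
      have hb1 : h (ξ - a⁻¹ • q) ≤ g * (1 + ‖ξ - a⁻¹ • q‖ ^ r) := hgr _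
      have hnorm : ‖ξ - a⁻¹ • q‖ ≤ a⁻¹ * (a * c₁ + c₂) := by
        have := norm_sub_le ξ (a⁻¹ • q)
        have h2 : ‖a⁻¹ • q‖ = a⁻¹ * c₂ := by
          rw [norm_smul, Real.norm_eq_abs, abs_of_pos (inv_pos.2 ha0)]
        rw [h2] at this
        calc ‖ξ - a⁻¹ • q‖ ≤ c₁ + a⁻¹ * c₂ := this
          _ = a⁻¹ * (a * c₁ + c₂) := by field_simp
      have hrpow : ‖ξ - a⁻¹ • q‖ ^ r ≤ (a⁻¹) ^ r * (a * c₁ + c₂) ^ r := by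
        rw [← Real.mul_rpow (inv_pos.2 ha0).le (by positivity)]
        exact Real.rpow_le_rpow (norm_nonneg _) hnorm hr0.le
      have hmul : a * (a⁻¹) ^ r = a ^ (1 - r) := by
        rw [Real.inv_rpow ha0.le, Real.rpow_sub ha0, Real.rpow_one, div_eq_mul_inv]
      have step : a * h (ξ - a⁻¹ • q) ≤ g * (a + a ^ (1 - r) * (a * c₁ + c₂) ^ r) := by
        have hs : a * h (ξ - a⁻¹ • q) ≤ a * (g * (1 + (a⁻¹) ^ r * (a * c₁ + c₂) ^ r)) := by
          apply mul_le_mul_of_nonneg_left _ ha0.le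
          exact hb1.trans (by nlinarith [hrpow])
        calc a * h (ξ - a⁻¹ • q) ≤ a * (g * (1 + (a⁻¹) ^ r * (a * c₁ + c₂) ^ r)) := hs
          _ = g * (a + (a * (a⁻¹) ^ r) * (a * c₁ + c₂) ^ r) := by ring
          _ = g * (a + a ^ (1 - r) * (a * c₁ + c₂) ^ r) := by rw [hmul]
      exact step.trans ha.le
    have hc' : ∀ᶠ n in nhdsWithin (0:ℝ) (Set.Ioi 0), c ≤ n * h (ξ - n⁻¹ • q) := hc
    obtain ⟨a, h1, h2⟩ := (hc'.and hev).exists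
    linarith
  by_contra hcon
  push_neg at hcon
  have := hεle (c / 2) (by linarith)
  linarith

/-- **Equivalence of the perspective and budget formulations of the per-sample subproblem**
(Lemma 10).  Under the piecewise-concavity, Lipschitz and sublinear-growth assumptions,
`S_i^{old}(b) = S_i^{new}(b)` for every budget `b ≥ 0`. -/
theorem Sold_eq_Snew
    {m K : ℕ} (hK : 0 < K)
    (ℓ : Vec m → ℝ) (ℓk : Fin K → Vec m → ℝ)
    (hpiece : ∀ ξ, ℓ ξ = ⨆ k, ℓk k ξ)
    (hconc : ∀ k, ConcaveOn ℝ Set.univ (ℓk k))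
    (hdiff : ∀ k, Differentiable ℝ (ℓk k))
    (Llip : ℝ≥0) (hlip : LipschitzWith Llip ℓ)
    (hgrowth : ∃ g > (0:ℝ), ∃ r ∈ Set.Ioo (0:ℝ) 1, ∀ ξ, ℓ ξ ≤ g * (1 + ‖ξ‖ ^ r))
    (ξhat : Vec m) (b : ℝ) (hb : 0 ≤ b) :
    Sold ℓk ξhat b = Snew ℓk ξhat b := by
  obtain ⟨g, hg, r, hr, hgrow⟩ := hgrowth
  have hbk : ∀ k x, ℓk k x ≤ g * (1 + ‖x‖ ^ r) := by
    intro k x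
    calc ℓk k x ≤ ⨆ j, ℓk j x := le_ciSup (f := fun j => ℓk j x) (Set.Finite.bddAbove (Set.finite_range _)) k
      _ = ℓ x := (hpiece x).symm
      _ ≤ _ := hgrow x
  have hpow : ∀ x : ℝ, 0 ≤ x → x ^ r ≤ 1 + x := by
    intro x hx
    rcases le_or_gt x 1 with h1 | h1
    · have := Real.rpow_le_one hx h1 hr.1.le
      linarith
    · have := Real.rpow_le_rpow_of_exponent_le h1.le hr.2.le
      rw [Real.rpow_one] at this
      linarith
  set c := ‖ξhat‖ with hc
  set M := g * (2 + c + b) with hM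
  -- generic pointwise bound
  have hterm : ∀ (k : Fin K) (w : Vec m), ℓk k (ξhat - w) ≤ g * (2 + c + ‖w‖) := by
    intro k w
    have h1 := hbk k (ξhat - w)
    have h2 := hpow ‖ξhat - w‖ (norm_nonneg _)
    have h3 := norm_sub_le ξhat w
    nlinarith
  have hOldSet : {v | ∃ (α : Fin K → ℝ) (q : Fin K → Vec m),
      (∀ k, 0 ≤ α k) ∧ ∑ k, α k = 1 ∧ ∑ k, ‖q k‖ ≤ b ∧
      v = ∑ k, persp (ℓk k) ξhat (q k) (α k)} = {v | ∃ (α : Fin K → ℝ) (q : Fin K → Vec m),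
      (∀ k, 0 ≤ α k) ∧ ∑ k, α k = 1 ∧ ∑ k, ‖q k‖ ≤ b ∧
      v = ∑ k, persp (ℓk k) ξhat (q k) (α k)} := rfl
  -- bounded above: Snew set
  have bddNew : BddAbove {v | ∃ (α : Fin K → ℝ) (w : Fin K → Vec m),
      (∀ k, 0 ≤ α k) ∧ ∑ k, α k = 1 ∧ ∑ k, α k * ‖w k‖ ≤ b ∧
      v = ∑ k, α k * ℓk k (ξhat - w k)} := by
    refine ⟨M, ?_⟩
    rintro v ⟨α, w, hα, hsum, hbud, rfl⟩
    have step : ∀ k ∈ Finset.univ, α k * ℓk k (ξhat - w k)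
        ≤ g * (2 + c) * α k + g * (α k * ‖w k‖) := by
      intro k _
      have := mul_le_mul_of_nonneg_left (hterm k (w k)) (hα k)
      nlinarith
    calc ∑ k, α k * ℓk k (ξhat - w k)
        ≤ ∑ k, (g * (2 + c) * α k + g * (α k * ‖w k‖)) := Finset.sum_le_sum step
      _ = g * (2 + c) * (∑ k, α k) + g * (∑ k, α k * ‖w k‖) := by
          rw [Finset.sum_add_distrib, ← Finset.mul_sum, ← Finset.mul_sum]
      _ ≤ g * (2 + c) * 1 + g * b := by
          have := mul_le_mul_of_nonneg_left hbud hg.le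
          rw [hsum]; linarith
      _ = M := by rw [hM]; ring
  -- bounded above: Sold set
  have bddOld : BddAbove {v | ∃ (α : Fin K → ℝ) (q : Fin K → Vec m),
      (∀ k, 0 ≤ α k) ∧ ∑ k, α k = 1 ∧ ∑ k, ‖q k‖ ≤ b ∧
      v = ∑ k, persp (ℓk k) ξhat (q k) (α k)} := by
    refine ⟨M, ?_⟩
    rintro v ⟨α, q, hα, hsum, hbud, rfl⟩
    have step : ∀ k ∈ Finset.univ, persp (ℓk k) ξhat (q k) (α k)
        ≤ g * (2 + c) * α k + g * ‖q k‖ := by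
      intro k _
      rcases (hα k).lt_or_eq with hpos | hzero
      · rw [persp_pos' hpos]
        have hsm : ‖(α k)⁻¹ • q k‖ = (α k)⁻¹ * ‖q k‖ := by
          rw [norm_smul, Real.norm_eq_abs, abs_of_pos (inv_pos.2 hpos)]
        have h1 := mul_le_mul_of_nonneg_left (hterm k ((α k)⁻¹ • q k)) hpos.le
        rw [hsm] at h1
        have h2 : α k * ((α k)⁻¹ * ‖q k‖) = ‖q k‖ := by field_simp
        nlinarith
      · rw [← hzero]
        have h1 := persp_zero_nonpos' hg hr (hbk k) ξhat (q k)
        have : 0 ≤ g * (2 + c) * 0 + g * ‖q k‖ := by positivity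
        linarith
    calc ∑ k, persp (ℓk k) ξhat (q k) (α k)
        ≤ ∑ k, (g * (2 + c) * α k + g * ‖q k‖) := Finset.sum_le_sum step
      _ = g * (2 + c) * (∑ k, α k) + g * (∑ k, ‖q k‖) := by
          rw [Finset.sum_add_distrib, ← Finset.mul_sum, ← Finset.mul_sum]
      _ ≤ g * (2 + c) * 1 + g * b := by
          have := mul_le_mul_of_nonneg_left hbud hg.le
          rw [hsum]; linarith
      _ = M := by rw [hM]; ring
  -- nonemptiness
  have k0 : Fin K := ⟨0, hK⟩
  set α₀ : Fin K → ℝ := fun k => if k = k0 then 1 else 0 with hα₀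
  have hα₀nn : ∀ k, 0 ≤ α₀ k := by intro k; simp only [hα₀]; split <;> norm_num
  have hα₀sum : ∑ k, α₀ k = 1 := by simp [hα₀]
  have neOld : Set.Nonempty {v | ∃ (α : Fin K → ℝ) (q : Fin K → Vec m),
      (∀ k, 0 ≤ α k) ∧ ∑ k, α k = 1 ∧ ∑ k, ‖q k‖ ≤ b ∧
      v = ∑ k, persp (ℓk k) ξhat (q k) (α k)} :=
    ⟨_, α₀, fun _ => 0, hα₀nn, hα₀sum, by simpa using hb, rfl⟩
  have neNew : Set.Nonempty {v | ∃ (α : Fin K → ℝ) (w : Fin K → Vec m),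
      (∀ k, 0 ≤ α k) ∧ ∑ k, α k = 1 ∧ ∑ k, α k * ‖w k‖ ≤ b ∧
      v = ∑ k, α k * ℓk k (ξhat - w k)} :=
    ⟨_, α₀, fun _ => 0, hα₀nn, hα₀sum, by simpa using hb, rfl⟩
  rw [Sold, Snew]
  apply le_antisymm
  · -- Sold ≤ Snew
    refine csSup_le neOld ?_
    rintro v ⟨α, q, hα, hsum, hbud, rfl⟩
    set w : Fin K → Vec m := fun k => if h : 0 < α k then (α k)⁻¹ • q k else 0 with hw
    have hfeas : ∑ k, α k * ‖w k‖ ≤ b := by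
      refine le_trans (Finset.sum_le_sum ?_) hbud
      intro k _
      by_cases hpos : 0 < α k
      · rw [hw]; simp only [dif_pos hpos]
        rw [norm_smul, Real.norm_eq_abs, abs_of_pos (inv_pos.2 hpos)]
        rw [← mul_assoc, mul_inv_cancel₀ hpos.ne', one_mul]
      · have hz : α k = 0 := le_antisymm (not_lt.1 hpos) (hα k)
        rw [hz, zero_mul]; exact norm_nonneg _
    have hle : ∑ k, persp (ℓk k) ξhat (q k) (α k) ≤ ∑ k, α k * ℓk k (ξhat - w k) := by
      refine Finset.sum_le_sum ?_
      intro k _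
      by_cases hpos : 0 < α k
      · rw [persp_pos' hpos, hw]; simp only [dif_pos hpos]; exact le_rfl
      · have hz : α k = 0 := le_antisymm (not_lt.1 hpos) (hα k)
        rw [hz, zero_mul, ← hz]
        exact (hz ▸ persp_zero_nonpos' hg hr (hbk k) ξhat (q k) : _)
    exact hle.trans (le_csSup bddNew ⟨α, w, hα, hsum, hfeas, rfl⟩)
  · -- Snew ≤ Sold
    refine csSup_le neNew ?_
    rintro v ⟨α, w, hα, hsum, hbud, rfl⟩
    refine le_csSup bddOld ⟨α, fun k => α k • w k, hα, hsum, ?_, ?_⟩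
    · refine le_trans (le_of_eq (Finset.sum_congr rfl ?_)) hbud
      intro k _
      rw [norm_smul, Real.norm_eq_abs, abs_of_nonneg (hα k)]
    · refine Finset.sum_congr rfl ?_
      intro k _
      by_cases hpos : 0 < α k
      · rw [persp_pos' hpos, smul_smul, inv_mul_cancel₀ hpos.ne', one_smul]
      · have hz : α k = 0 := le_antisymm (not_lt.1 hpos) (hα k)
        simp only [hz, zero_mul, zero_smul]
        exact (persp_zero' _ _).symm
end
end

section
/- Two-piece decomposition of the per-sample subproblem: Fix b ≥ 0 and i ∈ [t]. Under the piecewise-concavity and sublinear-growth assumptions, S_i^{new}(b) = max_{1 ≤ k_1 < k_2 ≤ K} S_i^{new,(k_1,k_2)}(b), where S_i^{new,(k_1,k_2)}(b) := sup { α_{k_1} ℓ_{k_1}(ξ̂_i − v_{k_1}) + α_{k_2} ℓ_{k_2}(ξ̂_i − v_{k_2}) : α_{k_1} ‖v_{k_1}‖ + α_{k_2} ‖v_{k_2}‖ ≤ b, α_{k_1} + α_{k_2} = 1, α_{k_1}, α_{k_2} ≥ 0 }. -/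
open MeasureTheory Filter
open scoped ENNReal NNReal BigOperators RealInnerProductSpace

set_option autoImplicit false

noncomputable section

/-- The two-piece budget subproblem `S_i^{new,(k₁,k₂)}(b)`. -/
def SnewPair {d : ℕ} (h₁ h₂ : Vec d → ℝ) (ξ : Vec d) (b : ℝ) : ℝ :=
  sSup {v | ∃ (α₁ α₂ : ℝ) (w₁ w₂ : Vec d),
    0 ≤ α₁ ∧ 0 ≤ α₂ ∧ α₁ + α₂ = 1 ∧ α₁ * ‖w₁‖ + α₂ * ‖w₂‖ ≤ b ∧
    v = α₁ * h₁ (ξ - w₁) + α₂ * h₂ (ξ - w₂)}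

/-!
For fixed displacements `w`, the value `∑ αₖ ℓₖ(ξ - wₖ)` and both constraints (`∑ αₖ = 1` and the
budget `∑ αₖ ‖wₖ‖ ≤ b`) are linear in the weights `α`. If at least three weights are positive, some
nonzero direction supported on them preserves both linear constraint values, and up to sign it does
not decrease the objective; moving along it until a weight vanishes shrinks the support. Hence
every feasible value is dominated by a feasible value using only two pieces. Conversely every
two-piece problem embeds into the `K`-piece one, and the Lipschitz bound `ℓₖ(ξ - w) ≤ ℓ(ξ) + L‖w‖`
makes all value sets bounded above, so the suprema agree.
-/

open Finset

section Weights

variable {ι : Type*} [Fintype ι]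

theorem exists_sum_eq_zero_sum_mul_eq_zero (d : ι → ℝ) {s : Finset ι} (hs : 3 ≤ #s) :
    ∃ u : ι → ℝ, (∀ k ∉ s, u k = 0) ∧ ∑ k, u k = 0 ∧ ∑ k, u k * d k = 0 ∧ ∃ k, u k ≠ 0 := by
  have hdep : ¬LinearIndependent ℝ (fun k : s => ((1 : ℝ), d k)) := fun h => by
    have := h.fintype_card_le_finrank
    simp only [Fintype.card_coe, Module.finrank_prod, Module.finrank_self] at this
    omega
  obtain ⟨g, hg, k, hk⟩ := Fintype.not_linearIndependent_iff.1 hdep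
  set u : ι → ℝ := Function.extend Subtype.val g 0
  have hu : ∀ k : s, u k = g k := fun k => Subtype.val_injective.extend_apply g 0 k
  have hu0 : ∀ k ∉ s, u k = 0 := fun k hk =>
    Function.extend_apply' _ _ _ (fun ⟨a, ha⟩ => hk (ha ▸ a.2))
  have hsum : ∀ f : ι → ℝ, ∑ k, u k * f k = ∑ k : s, g k * f k := fun f => by
    rw [← sum_subset (subset_univ s) (fun k _ hk => by rw [hu0 k hk, zero_mul]),
      ← sum_coe_sort]
    exact sum_congr rfl fun k _ => by rw [hu]
  simp only [Prod.ext_iff, Prod.fst_sum, Prod.snd_sum, Prod.smul_mk, smul_eq_mul, mul_one,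
    Prod.fst_zero, Prod.snd_zero] at hg
  refine ⟨u, hu0, ?_, ?_, k, (hu k).trans_ne hk⟩
  · simpa only [mul_one, hg.1] using hsum fun _ => 1
  · exact (hsum d).trans hg.2

theorem exists_nonneg_add_mul_support_ssubset {α u : ι → ℝ} (hα : ∀ k, 0 ≤ α k)
    (hu : ∀ k, α k = 0 → u k = 0) (hneg : ∃ k, u k < 0) :
    ∃ t : ℝ, 0 ≤ t ∧ (∀ k, 0 ≤ α k + t * u k) ∧
      ({k | α k + t * u k ≠ 0} : Finset ι) ⊂ ({k | α k ≠ 0} : Finset ι) := by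
  obtain ⟨k₀, hk₀, hmin⟩ := ({k | u k < 0} : Finset ι).exists_min_image
    (fun k => α k / -u k) (by simpa [Finset.Nonempty] using hneg)
  simp only [mem_filter, mem_univ, true_and] at hk₀ hmin
  have hαk₀ : α k₀ ≠ 0 := fun h => hk₀.ne (hu k₀ h)
  refine ⟨α k₀ / -u k₀, div_nonneg (hα k₀) (neg_nonneg.2 hk₀.le), fun k => ?_, ?_⟩
  · rcases lt_or_ge (u k) 0 with hk | hk
    · have := (le_div_iff₀ (neg_pos.2 hk)).1 (hmin k hk)
      linarith
    · exact add_nonneg (hα k) (mul_nonneg (div_nonneg (hα k₀) (neg_nonneg.2 hk₀.le)) hk)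
  · refine ssubset_iff_of_subset (fun k => ?_) |>.2 ⟨k₀, ?_, ?_⟩
    · simp only [mem_filter, mem_univ, true_and]
      intro hk hα0
      rw [hα0, hu k hα0, mul_zero, add_zero] at hk
      exact hk rfl
    · simpa using hαk₀
    · simp only [mem_filter, mem_univ, true_and, not_not]
      field_simp [hk₀.ne]
      ring

theorem exists_weights_support_ssubset {α : ι → ℝ} (d c : ι → ℝ) (hα : ∀ k, 0 ≤ α k)
    (h3 : 3 ≤ #({k | α k ≠ 0} : Finset ι)) :
    ∃ α' : ι → ℝ, (∀ k, 0 ≤ α' k) ∧ ∑ k, α' k = ∑ k, α k ∧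
      ∑ k, α' k * d k = ∑ k, α k * d k ∧ ∑ k, α k * c k ≤ ∑ k, α' k * c k ∧
      #({k | α' k ≠ 0} : Finset ι) < #({k | α k ≠ 0} : Finset ι) := by
  obtain ⟨u₀, hu₀s, hu₀1, hu₀d, hu₀ne⟩ := exists_sum_eq_zero_sum_mul_eq_zero d h3
  obtain ⟨u, hus, hu1, hud, ⟨k, huk⟩, huc⟩ : ∃ u : ι → ℝ, (∀ k, α k = 0 → u k = 0) ∧
      ∑ k, u k = 0 ∧ ∑ k, u k * d k = 0 ∧ (∃ k, u k ≠ 0) ∧ 0 ≤ ∑ k, u k * c k := by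
    have hs : ∀ k, α k = 0 → u₀ k = 0 := fun k hk => hu₀s k (by simpa using hk)
    rcases le_total 0 (∑ k, u₀ k * c k) with h | h
    · exact ⟨u₀, hs, hu₀1, hu₀d, hu₀ne, h⟩
    · refine ⟨-u₀, fun k hk => by simp [hs k hk], ?_, ?_, ?_, ?_⟩
      · simp [hu₀1]
      · simp [hu₀d]
      · simpa using hu₀ne
      · simpa using h
  have hneg : ∃ k, u k < 0 := by
    by_contra! hpos
    exact huk ((sum_eq_zero_iff_of_nonneg fun k _ => hpos k).1 hu1 k (mem_univ k))
  obtain ⟨t, ht, hαt, hsupp⟩ := exists_nonneg_add_mul_support_ssubset hα hus hneg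
  have hmove : ∀ f : ι → ℝ, ∑ k, (α k + t * u k) * f k = ∑ k, α k * f k + t * ∑ k, u k * f k :=
    fun f => by simp only [add_mul, sum_add_distrib, mul_sum, mul_assoc]
  refine ⟨fun k => α k + t * u k, hαt, ?_, ?_, ?_, card_lt_card hsupp⟩
  · simpa only [mul_one, hu1, mul_zero, add_zero] using hmove fun _ => 1
  · rw [hmove, hud, mul_zero, add_zero]
  · rw [hmove]
    exact le_add_of_nonneg_right (mul_nonneg ht huc)

theorem exists_weights_support_card_le_two {α : ι → ℝ} (d c : ι → ℝ) (hα : ∀ k, 0 ≤ α k) :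
    ∃ α' : ι → ℝ, (∀ k, 0 ≤ α' k) ∧ ∑ k, α' k = ∑ k, α k ∧
      ∑ k, α' k * d k = ∑ k, α k * d k ∧ ∑ k, α k * c k ≤ ∑ k, α' k * c k ∧
      #({k | α' k ≠ 0} : Finset ι) ≤ 2 := by
  induction hn : #({k | α k ≠ 0} : Finset ι) using Nat.strong_induction_on generalizing α with
  | _ n ih =>
    rcases le_or_gt n 2 with h2 | h3
    · exact ⟨α, hα, rfl, rfl, le_rfl, hn ▸ h2⟩
    obtain ⟨α₁, hα₁, h1, hd, hc, hlt⟩ := exists_weights_support_ssubset d c hα (hn ▸ h3)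
    obtain ⟨α₂, hα₂, h1', hd', hc', hcard⟩ := ih _ (hn ▸ hlt) hα₁ rfl
    exact ⟨α₂, hα₂, h1'.trans h1, hd'.trans hd, hc.trans hc', hcard⟩

theorem exists_pair_of_support_card_le_two (hι : 2 ≤ Fintype.card ι) {α : ι → ℝ}
    (hα : #({k | α k ≠ 0} : Finset ι) ≤ 2) :
    ∃ i j, i ≠ j ∧ ∀ k, k ≠ i ∧ k ≠ j → α k = 0 := by
  classical
  obtain ⟨t, hst, -, ht⟩ := exists_subsuperset_card_eq (subset_univ _) hα hι
  obtain ⟨i, j, hij, rfl⟩ := card_eq_two.1 ht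
  refine ⟨i, j, hij, fun k hk => ?_⟩
  by_contra hαk
  simpa [hk.1, hk.2] using hst (mem_filter.2 ⟨mem_univ k, hαk⟩)

theorem exists_pair_weights_le (hι : 2 ≤ Fintype.card ι) {α : ι → ℝ} {d c : ι → ℝ} {b : ℝ}
    (hα : ∀ k, 0 ≤ α k) (hα1 : ∑ k, α k = 1) (hαd : ∑ k, α k * d k ≤ b) :
    ∃ i j, i ≠ j ∧ ∃ β₁ β₂ : ℝ, 0 ≤ β₁ ∧ 0 ≤ β₂ ∧ β₁ + β₂ = 1 ∧
      β₁ * d i + β₂ * d j ≤ b ∧ ∑ k, α k * c k ≤ β₁ * c i + β₂ * c j := by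
  obtain ⟨β, hβ, h1, hd, hc, hcard⟩ := exists_weights_support_card_le_two d c hα
  obtain ⟨i, j, hij, hβ0⟩ := exists_pair_of_support_card_le_two hι hcard
  have hpair : ∀ f : ι → ℝ, ∑ k, β k * f k = β i * f i + β j * f j := fun f =>
    Fintype.sum_eq_add i j hij fun k hk => by rw [hβ0 k hk, zero_mul]
  refine ⟨i, j, hij, β i, β j, hβ i, hβ j, ?_, ?_, ?_⟩
  · rw [← Fintype.sum_eq_add i j hij hβ0, h1, hα1]
  · rwa [← hpair, hd]
  · rwa [← hpair]

end Weights

theorem csSup_eq_csSup_image_csSup {α ι : Type*} [ConditionallyCompleteLattice α] {A : Set α}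
    {S : ι → Set α} {J : Set ι} (hJ : J.Finite) (hJne : J.Nonempty) (hA : BddAbove A)
    (hS : ∀ j ∈ J, (S j).Nonempty) (hSA : ∀ j ∈ J, S j ⊆ A)
    (hAS : ∀ a ∈ A, ∃ j ∈ J, ∃ s ∈ S j, a ≤ s) :
    sSup A = sSup ((fun j => sSup (S j)) '' J) := by
  have hbdd : BddAbove ((fun j => sSup (S j)) '' J) := (hJ.image _).bddAbove
  obtain ⟨j₀, hj₀⟩ := hJne
  apply le_antisymm
  · refine csSup_le ((hS j₀ hj₀).mono (hSA j₀ hj₀)) fun a ha => ?_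
    obtain ⟨j, hj, s, hs, has⟩ := hAS a ha
    exact has.trans <| (le_csSup (hA.mono (hSA j hj)) hs).trans <|
      le_csSup hbdd (Set.mem_image_of_mem _ hj)
  · refine csSup_le ⟨_, Set.mem_image_of_mem _ hj₀⟩ ?_
    rintro _ ⟨j, hj, rfl⟩
    exact csSup_le_csSup hA (hS j hj) (hSA j hj)

section Subproblem

variable {d K : ℕ}

def snewSet (ℓk : Fin K → Vec d → ℝ) (ξ : Vec d) (b : ℝ) : Set ℝ :=
  {v | ∃ (α : Fin K → ℝ) (w : Fin K → Vec d),
    (∀ k, 0 ≤ α k) ∧ ∑ k, α k = 1 ∧ ∑ k, α k * ‖w k‖ ≤ b ∧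
    v = ∑ k, α k * ℓk k (ξ - w k)}

def snewPairSet (h₁ h₂ : Vec d → ℝ) (ξ : Vec d) (b : ℝ) : Set ℝ :=
  {v | ∃ (α₁ α₂ : ℝ) (w₁ w₂ : Vec d),
    0 ≤ α₁ ∧ 0 ≤ α₂ ∧ α₁ + α₂ = 1 ∧ α₁ * ‖w₁‖ + α₂ * ‖w₂‖ ≤ b ∧
    v = α₁ * h₁ (ξ - w₁) + α₂ * h₂ (ξ - w₂)}

theorem Snew_eq_sSup_snewSet (ℓk : Fin K → Vec d → ℝ) (ξ : Vec d) (b : ℝ) :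
    Snew ℓk ξ b = sSup (snewSet ℓk ξ b) :=
  rfl

theorem SnewPair_eq_sSup_snewPairSet (h₁ h₂ : Vec d → ℝ) (ξ : Vec d) (b : ℝ) :
    SnewPair h₁ h₂ ξ b = sSup (snewPairSet h₁ h₂ ξ b) :=
  rfl

theorem snewPairSet_comm (h₁ h₂ : Vec d → ℝ) (ξ : Vec d) (b : ℝ) :
    snewPairSet h₁ h₂ ξ b = snewPairSet h₂ h₁ ξ b := by
  have key : ∀ h₁ h₂ : Vec d → ℝ, snewPairSet h₁ h₂ ξ b ⊆ snewPairSet h₂ h₁ ξ b := by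
    rintro h₁ h₂ _ ⟨α₁, α₂, w₁, w₂, h0₁, h0₂, h1, hb, rfl⟩
    exact ⟨α₂, α₁, w₂, w₁, h0₂, h0₁, by linarith, by linarith, by ring⟩
  exact (key h₁ h₂).antisymm (key h₂ h₁)

theorem snewPairSet_nonempty (h₁ h₂ : Vec d → ℝ) (ξ : Vec d) {b : ℝ} (hb : 0 ≤ b) :
    (snewPairSet h₁ h₂ ξ b).Nonempty :=
  ⟨_, 1, 0, 0, 0, zero_le_one, le_rfl, add_zero 1, by simpa using hb, rfl⟩

theorem snewPairSet_subset_snewSet (ℓk : Fin K → Vec d → ℝ) (ξ : Vec d) (b : ℝ) {i j : Fin K}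
    (hij : i ≠ j) : snewPairSet (ℓk i) (ℓk j) ξ b ⊆ snewSet ℓk ξ b := by
  rintro _ ⟨α₁, α₂, w₁, w₂, h0₁, h0₂, h1, hb, rfl⟩
  let α : Fin K → ℝ := fun k => if k = i then α₁ else if k = j then α₂ else 0
  let w : Fin K → Vec d := fun k => if k = i then w₁ else w₂
  have hpair : ∀ f : Fin K → ℝ, ∑ k, α k * f k = α₁ * f i + α₂ * f j := fun f => by
    rw [Fintype.sum_eq_add i j hij fun k hk => by simp [α, hk.1, hk.2]]
    simp [α, hij.symm]
  refine ⟨α, w, fun k => ?_, ?_, ?_, ?_⟩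
  · dsimp only [α]
    split_ifs
    exacts [h0₁, h0₂, le_rfl]
  · simpa [h1] using hpair 1
  · simpa [hpair, w, hij.symm] using hb
  · rw [hpair fun k => ℓk k (ξ - w k)]
    simp [w, hij.symm]

theorem exists_le_mem_snewPairSet (hK : 2 ≤ K) {ℓk : Fin K → Vec d → ℝ} {ξ : Vec d} {b v : ℝ}
    (hv : v ∈ snewSet ℓk ξ b) :
    ∃ i j, i < j ∧ ∃ v' ∈ snewPairSet (ℓk i) (ℓk j) ξ b, v ≤ v' := by
  obtain ⟨α, w, hα, hα1, hb, rfl⟩ := hv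
  obtain ⟨i, j, hij, β₁, β₂, h0₁, h0₂, h1, hβb, hle⟩ :=
    exists_pair_weights_le (by simpa using hK) hα hα1 hb (c := fun k => ℓk k (ξ - w k))
  have hmem : β₁ * ℓk i (ξ - w i) + β₂ * ℓk j (ξ - w j) ∈ snewPairSet (ℓk i) (ℓk j) ξ b :=
    ⟨β₁, β₂, w i, w j, h0₁, h0₂, h1, hβb, rfl⟩
  rcases hij.lt_or_gt with hlt | hgt
  · exact ⟨i, j, hlt, _, hmem, hle⟩
  · exact ⟨j, i, hgt, _, snewPairSet_comm (ℓk i) (ℓk j) ξ b ▸ hmem, hle⟩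

theorem bddAbove_snewSet {ℓk : Fin K → Vec d → ℝ} {ξ : Vec d} {C L : ℝ} (hL : 0 ≤ L)
    (hℓk : ∀ k w, ℓk k (ξ - w) ≤ C + L * ‖w‖) (b : ℝ) : BddAbove (snewSet ℓk ξ b) := by
  refine ⟨C + L * b, ?_⟩
  rintro _ ⟨α, w, hα, hα1, hb, rfl⟩
  calc ∑ k, α k * ℓk k (ξ - w k) ≤ ∑ k, α k * (C + L * ‖w k‖) :=
        sum_le_sum fun k _ => mul_le_mul_of_nonneg_left (hℓk k (w k)) (hα k)
    _ = C + L * ∑ k, α k * ‖w k‖ := by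
        simp only [mul_add, sum_add_distrib, ← sum_mul, hα1, one_mul, mul_sum, mul_left_comm]
    _ ≤ C + L * b := by gcongr

end Subproblem

theorem Snew_eq_max_pairs_general
    {m K : ℕ} (hK : 2 ≤ K)
    (ℓ : Vec m → ℝ) (ℓk : Fin K → Vec m → ℝ)
    (hpiece : ∀ ξ, ℓ ξ = ⨆ k, ℓk k ξ)
    (hlip : ∃ L : ℝ≥0, LipschitzWith L ℓ)
    (ξhat : Vec m) (b : ℝ) (hb : 0 ≤ b) :
    Snew ℓk ξhat b
      = sSup {v | ∃ k₁ k₂ : Fin K, k₁ < k₂ ∧ v = SnewPair (ℓk k₁) (ℓk k₂) ξhat b} := by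
  obtain ⟨L, hL⟩ := hlip
  have hℓk : ∀ k w, ℓk k (ξhat - w) ≤ ℓ ξhat + L * ‖w‖ := fun k w => calc
      ℓk k (ξhat - w) ≤ ℓ (ξhat - w) := by
        rw [hpiece]; exact le_ciSup (Set.finite_range fun k => ℓk k (ξhat - w)).bddAbove k
      _ ≤ ℓ ξhat + L * ‖w‖ := by simpa [dist_eq_norm] using hL.le_add_mul (ξhat - w) ξhat
  have hpairs : {v | ∃ k₁ k₂ : Fin K, k₁ < k₂ ∧ v = SnewPair (ℓk k₁) (ℓk k₂) ξhat b} =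
      (fun p : Fin K × Fin K => sSup (snewPairSet (ℓk p.1) (ℓk p.2) ξhat b)) ''
        {p | p.1 < p.2} := by
    ext
    simp [SnewPair_eq_sSup_snewPairSet, eq_comm]
  rw [hpairs, Snew_eq_sSup_snewSet]
  refine csSup_eq_csSup_image_csSup (Set.toFinite _)
    ⟨(⟨0, by omega⟩, ⟨1, by omega⟩), Fin.mk_lt_mk.2 one_pos⟩ (bddAbove_snewSet L.2 hℓk b)
    (fun _ _ => snewPairSet_nonempty _ _ _ hb)
    (fun p hp => snewPairSet_subset_snewSet ℓk ξhat b (ne_of_lt hp)) fun v hv => ?_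
  obtain ⟨i, j, hij, v', hv', hle⟩ := exists_le_mem_snewPairSet hK hv
  exact ⟨(i, j), hij, v', hv', hle⟩

/-- **Two-piece decomposition of the per-sample subproblem** (Lemma 11).  Under the
piecewise-concavity, Lipschitz and sublinear-growth assumptions, the `K`-piece subproblem
`S_i^{new}(b)` equals the maximum over all pairs `k₁ < k₂` of the two-piece subproblems. -/
theorem Snew_eq_max_pairs
    {m K : ℕ} (hK : 2 ≤ K)
    (ℓ : Vec m → ℝ) (ℓk : Fin K → Vec m → ℝ)
    (hpiece : ∀ ξ, ℓ ξ = ⨆ k, ℓk k ξ)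
    (hconc : ∀ k, ConcaveOn ℝ Set.univ (ℓk k))
    (hdiff : ∀ k, Differentiable ℝ (ℓk k))
    (hlip : ∃ L : ℝ≥0, LipschitzWith L ℓ)
    (hgrowth : ∃ g > (0:ℝ), ∃ r ∈ Set.Ioo (0:ℝ) 1, ∀ ξ, ℓ ξ ≤ g * (1 + ‖ξ‖ ^ r))
    (ξhat : Vec m) (b : ℝ) (hb : 0 ≤ b) :
    Snew ℓk ξhat b
      = sSup {v | ∃ k₁ k₂ : Fin K, k₁ < k₂ ∧ v = SnewPair (ℓk k₁) (ℓk k₂) ξhat b} :=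
  Snew_eq_max_pairs_general hK ℓ ℓk hpiece hlip ξhat b hb
end
end

section
/- Nested concavity of the pairwise value function: Fix i ∈ [t], 1 ≤ k_1 < k_2 ≤ K and b ≥ 0, and define Ψ(α,β) := max { α_1 ℓ_{k_1}(ξ̂_i − q_1/α_1) + α_2 ℓ_{k_2}(ξ̂_i − q_2/α_2) : ‖q_1‖ ≤ β_1, ‖q_2‖ ≤ β_2 } for α = (α_1,α_2) in the simplex {α_1 + α_2 = 1, α_1, α_2 ≥ 0} and β = (β_1,β_2) in {β_1 + β_2 = b, β_1, β_2 ≥ 0}. Then (1) for each fixed α, the map β ↦ Ψ(α,β) is concave on {β_1 + β_2 = b, β ≥ 0}, and (2) the map α ↦ max_β Ψ(α,β) is concave on the simplex. -/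
open MeasureTheory Filter
open scoped ENNReal NNReal BigOperators RealInnerProductSpace

set_option autoImplicit false

noncomputable section

/-- The pairwise value function `Ψ(α, β)` for fixed weight allocation `α` and budget
allocation `β`. -/
def Psi {d : ℕ} (h₁ h₂ : Vec d → ℝ) (ξ : Vec d) (α β : ℝ × ℝ) : ℝ :=
  sSup {v | ∃ q₁ q₂ : Vec d, ‖q₁‖ ≤ β.1 ∧ ‖q₂‖ ≤ β.2 ∧
    v = persp h₁ ξ q₁ α.1 + persp h₂ ξ q₂ α.2}

/-!
For `s > 0` the map `(s, q) ↦ s * h (ξ - s⁻¹ • q)` is jointly concave: concavity of `h` with the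
weights `a s / γ`, `c t / γ`, where `γ = a s + c t`. At `α = 0` the value is a liminf, and at every
`α ≥ 0` it is the liminf of the values at `α + ε` as `ε → 0⁺`; since liminf is superadditive, joint
concavity passes to these limits. When the function whose liminf is taken is unbounded below, the
liminf takes the junk value `0`, which is also the value at `q = 0`; replacing `q` by `0` then
changes neither the value nor the budget used. Hence `Ψ` is jointly concave in `(α, β)`: combining
feasible points for `(α, β)` and `(α', β')` gives a feasible point for the convex combination.
Both claims follow, the second after taking suprema over the budget simplex.
-/

open Set Filter Topology

lemma mul_sSup_add_mul_sSup_le {S T : Set ℝ} {a c z : ℝ} (ha : 0 ≤ a) (hc : 0 ≤ c)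
    (hS : S.Nonempty) (hT : T.Nonempty) (h : ∀ v ∈ S, ∀ w ∈ T, a * v + c * w ≤ z) :
    a * sSup S + c * sSup T ≤ z := by
  rw [← smul_eq_mul a, ← smul_eq_mul c, ← Real.sSup_smul_of_nonneg ha,
    ← Real.sSup_smul_of_nonneg hc, ← le_sub_iff_add_le]
  refine csSup_le hS.smul_set ?_
  rintro _ ⟨v, hv, rfl⟩
  refine le_sub_comm.mp (csSup_le hT.smul_set ?_)
  rintro _ ⟨w, hw, rfl⟩
  exact le_sub_iff_add_le'.mpr (h v hv w hw)

lemma Filter.mul_liminf_add_mul_liminf_le {ι : Type*} {l : Filter ι} [l.NeBot]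
    {f g u : ι → ℝ} {a c : ℝ} (ha : 0 ≤ a) (hc : 0 ≤ c) (hac : a + c = 1)
    (hf : IsBoundedUnder (· ≥ ·) l f) (hg : IsBoundedUnder (· ≥ ·) l g)
    (hu : IsBoundedUnder (· ≤ ·) l u) (h : ∀ᶠ x in l, a * f x + c * g x ≤ u x) :
    a * liminf f l + c * liminf g l ≤ liminf u l := by
  refine le_of_forall_sub_le fun ε hε => ?_
  have hf' := eventually_lt_of_lt_liminf (sub_lt_self (liminf f l) hε) hf
  have hg' := eventually_lt_of_lt_liminf (sub_lt_self (liminf g l) hε) hg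
  calc a * liminf f l + c * liminf g l - ε
      = a * (liminf f l - ε) + c * (liminf g l - ε) := by linear_combination ε * hac
    _ ≤ liminf u l := by
      refine le_liminf_of_le hu.isCoboundedUnder_ge ?_
      filter_upwards [hf', hg', h] with x hfx hgx hx
      nlinarith [mul_le_mul_of_nonneg_left hfx.le ha, mul_le_mul_of_nonneg_left hgx.le hc]

lemma norm_combo_le {E : Type*} [SeminormedAddCommGroup E] [NormedSpace ℝ E] {a c : ℝ}
    (ha : 0 ≤ a) (hc : 0 ≤ c) (x y : E) : ‖a • x + c • y‖ ≤ a * ‖x‖ + c * ‖y‖ :=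
  (norm_add_le _ _).trans_eq (by rw [norm_smul_of_nonneg ha, norm_smul_of_nonneg hc])

lemma ConcaveOn.continuous_of_univ {E : Type*} [NormedAddCommGroup E] [NormedSpace ℝ E]
    [FiniteDimensional ℝ E] {f : E → ℝ} (hf : ConcaveOn ℝ univ f) : Continuous f :=
  continuousOn_univ.mp (hf.continuousOn isOpen_univ)

section Perspective

variable {d : ℕ} {h : Vec d → ℝ} {ξ q q' : Vec d} {α α' : ℝ}

lemma persp_of_pos (hα : 0 < α) : persp h ξ q α = α * h (ξ - α⁻¹ • q) := if_pos hα

lemma persp_zero : persp h ξ q 0 = liminf (persp h ξ q) (𝓝[>] 0) := by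
  rw [persp, if_neg (lt_irrefl 0)]
  refine liminf_congr ?_
  filter_upwards [self_mem_nhdsWithin] with s hs
  exact (persp_of_pos hs).symm

lemma ConcaveOn.continuousOn_persp (hh : ConcaveOn ℝ univ h) :
    ContinuousOn (persp h ξ q) (Ioi 0) := by
  refine ContinuousOn.congr (f := fun s => s * h (ξ - s⁻¹ • q)) ?_ fun s hs => persp_of_pos hs
  exact continuousOn_id.mul (hh.continuous_of_univ.comp_continuousOn
    (continuousOn_const.sub
      ((continuousOn_inv₀.mono fun s hs => (ne_of_gt hs)).smul continuousOn_const)))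

lemma ConcaveOn.tendsto_persp_add (hh : ConcaveOn ℝ univ h) (hα : 0 < α) :
    Tendsto (fun ε => persp h ξ q (α + ε)) (𝓝[>] 0) (𝓝 (persp h ξ q α)) := by
  have hcont := (hh.continuousOn_persp (ξ := ξ) (q := q)).continuousAt (Ioi_mem_nhds hα)
  refine hcont.tendsto.comp ?_
  simpa using ((continuous_const_add α).tendsto 0).mono_left nhdsWithin_le_nhds

lemma ConcaveOn.persp_eq_liminf_add (hh : ConcaveOn ℝ univ h) (hα : 0 ≤ α) :
    persp h ξ q α = liminf (fun ε => persp h ξ q (α + ε)) (𝓝[>] 0) := by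
  rcases hα.eq_or_lt with rfl | hα
  · simpa only [zero_add] using persp_zero
  · exact (hh.tendsto_persp_add hα).liminf_eq.symm

lemma ConcaveOn.combo_persp_le_of_pos (hh : ConcaveOn ℝ univ h) {a c : ℝ} (ha : 0 ≤ a)
    (hc : 0 ≤ c) (hac : a + c = 1) (hα : 0 < α) (hα' : 0 < α') :
    a * persp h ξ q α + c * persp h ξ q' α' ≤ persp h ξ (a • q + c • q') (a * α + c * α') := by
  have hγ : 0 < a * α + c * α' := by
    rcases ha.eq_or_lt with rfl | ha
    · simp_all
    · positivity
  set γ := a * α + c * α'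
  have hw : a * α / γ + c * α' / γ = 1 := by rw [← add_div, div_self hγ.ne']
  have key := hh.2 (mem_univ (ξ - α⁻¹ • q)) (mem_univ (ξ - α'⁻¹ • q')) (by positivity)
    (by positivity) hw
  have hpt : (a * α / γ) • (ξ - α⁻¹ • q) + (c * α' / γ) • (ξ - α'⁻¹ • q')
      = ξ - γ⁻¹ • (a • q + c • q') := by
    match_scalars <;> field_simp; rfl
  rw [hpt, smul_eq_mul, smul_eq_mul] at key
  rw [persp_of_pos hα, persp_of_pos hα', persp_of_pos hγ]
  calc a * (α * h (ξ - α⁻¹ • q)) + c * (α' * h (ξ - α'⁻¹ • q'))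
      = γ * (a * α / γ * h (ξ - α⁻¹ • q) + c * α' / γ * h (ξ - α'⁻¹ • q')) := by
        field_simp
    _ ≤ γ * h (ξ - γ⁻¹ • (a • q + c • q')) := mul_le_mul_of_nonneg_left key hγ.le

lemma ConcaveOn.persp_le_of_pos (hh : ConcaveOn ℝ univ h) (hα : 0 < α) (hα₁ : α ≤ 1) :
    persp h ξ q α ≤ |h (ξ - q)| + |h ξ| := by
  have key := hh.2 (mem_univ (ξ - α⁻¹ • q)) (mem_univ ξ) hα.le (sub_nonneg.mpr hα₁)
    (by ring)
  have hpt : α • (ξ - α⁻¹ • q) + (1 - α) • ξ = ξ - q := by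
    match_scalars <;> field_simp; ring
  rw [hpt, smul_eq_mul, smul_eq_mul] at key
  rw [persp_of_pos hα]
  nlinarith [le_abs_self (h (ξ - q)), neg_abs_le (h ξ), abs_nonneg (h ξ)]

lemma ConcaveOn.persp_le (hh : ConcaveOn ℝ univ h) (hα : 0 ≤ α) (hα₁ : α ≤ 1) :
    persp h ξ q α ≤ |h (ξ - q)| + |h ξ| := by
  rcases hα.eq_or_lt with rfl | hα
  · have hle : ∀ᶠ s in 𝓝[>] (0 : ℝ), persp h ξ q s ≤ |h (ξ - q)| + |h ξ| := by
      filter_upwards [Ioo_mem_nhdsGT one_pos] with s hs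
      exact hh.persp_le_of_pos hs.1 hs.2.le
    rw [persp_zero, liminf_eq]
    refine Real.sSup_le (fun x hx => ?_) (by positivity)
    obtain ⟨s, hxs, hs⟩ := ((show ∀ᶠ s in 𝓝[>] 0, x ≤ persp h ξ q s from hx).and hle).exists
    exact hxs.trans hs
  · exact hh.persp_le_of_pos hα hα₁

lemma ConcaveOn.exists_persp_le (hh : ConcaveOn ℝ univ h) (ξ : Vec d) (r : ℝ) :
    ∃ C, ∀ q : Vec d, ‖q‖ ≤ r → ∀ α ∈ Icc (0 : ℝ) 1, persp h ξ q α ≤ C := by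
  obtain ⟨C, hC⟩ := (isCompact_closedBall (0 : Vec d) r).exists_bound_of_continuousOn
    (hh.continuous_of_univ.comp (continuous_sub_left ξ)).continuousOn
  refine ⟨C + |h ξ|, fun q hq α hα => (hh.persp_le hα.1 hα.2).trans ?_⟩
  have := hC q (mem_closedBall_zero_iff.mpr hq)
  simp only [Function.comp_apply, Real.norm_eq_abs] at this
  linarith

lemma ConcaveOn.isBoundedUnder_le_persp_add (hh : ConcaveOn ℝ univ h) (hα : 0 ≤ α) :
    IsBoundedUnder (· ≤ ·) (𝓝[>] 0) (fun ε => persp h ξ q (α + ε)) := by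
  rcases hα.eq_or_lt with rfl | hα
  · refine isBoundedUnder_of_eventually_le (a := |h (ξ - q)| + |h ξ|) ?_
    filter_upwards [Ioo_mem_nhdsGT one_pos] with s hs
    exact hh.persp_le (by linarith [hs.1]) (by linarith [hs.2])
  · exact (hh.tendsto_persp_add hα).isBoundedUnder_le

lemma tendsto_persp_zero :
    Tendsto (fun ε => persp h ξ 0 (0 + ε)) (𝓝[>] 0) (𝓝 0) := by
  have : Tendsto (fun ε : ℝ => ε * h ξ) (𝓝[>] 0) (𝓝 0) := by
    simpa using ((continuous_mul_const (h ξ)).tendsto 0).mono_left nhdsWithin_le_nhds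
  refine this.congr' ?_
  filter_upwards [self_mem_nhdsWithin] with s (hs : 0 < s)
  rw [zero_add, persp_of_pos hs, smul_zero, sub_zero]

lemma ConcaveOn.exists_persp_eq_isBoundedUnder_ge (hh : ConcaveOn ℝ univ h) (hα : 0 ≤ α)
    (q : Vec d) : ∃ r : Vec d, ‖r‖ ≤ ‖q‖ ∧ persp h ξ r α = persp h ξ q α ∧
      IsBoundedUnder (· ≥ ·) (𝓝[>] 0) (fun ε => persp h ξ r (α + ε)) := by
  rcases hα.eq_or_lt with rfl | hα
  · by_cases hq : IsBoundedUnder (· ≥ ·) (𝓝[>] 0) (fun ε => persp h ξ q (0 + ε))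
    · exact ⟨q, le_rfl, rfl, hq⟩
    refine ⟨0, by simp, ?_, tendsto_persp_zero.isBoundedUnder_ge⟩
    rw [hh.persp_eq_liminf_add le_rfl, hh.persp_eq_liminf_add le_rfl,
      tendsto_persp_zero.liminf_eq, Real.liminf_of_not_isBoundedUnder hq]
  · exact ⟨q, le_rfl, rfl, (hh.tendsto_persp_add hα).isBoundedUnder_ge⟩

lemma ConcaveOn.combo_persp_le (hh : ConcaveOn ℝ univ h) {a c : ℝ} (ha : 0 ≤ a)
    (hc : 0 ≤ c) (hac : a + c = 1) (hα : 0 ≤ α) (hα' : 0 ≤ α')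
    (hq : IsBoundedUnder (· ≥ ·) (𝓝[>] 0) (fun ε => persp h ξ q (α + ε)))
    (hq' : IsBoundedUnder (· ≥ ·) (𝓝[>] 0) (fun ε => persp h ξ q' (α' + ε))) :
    a * persp h ξ q α + c * persp h ξ q' α' ≤ persp h ξ (a • q + c • q') (a * α + c * α') := by
  have hγ : 0 ≤ a * α + c * α' := by positivity
  rw [hh.persp_eq_liminf_add hα, hh.persp_eq_liminf_add hα', hh.persp_eq_liminf_add hγ]
  refine mul_liminf_add_mul_liminf_le ha hc hac hq hq' (hh.isBoundedUnder_le_persp_add hγ) ?_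
  filter_upwards [self_mem_nhdsWithin] with ε (hε : 0 < ε)
  have := hh.combo_persp_le_of_pos (ξ := ξ) (q := q) (q' := q') ha hc hac
    (add_pos_of_nonneg_of_pos hα hε) (add_pos_of_nonneg_of_pos hα' hε)
  rwa [show a * (α + ε) + c * (α' + ε) = a * α + c * α' + ε by linear_combination ε * hac]
    at this

lemma ConcaveOn.exists_combo_persp_le (hh : ConcaveOn ℝ univ h) {a c : ℝ} (ha : 0 ≤ a)
    (hc : 0 ≤ c) (hac : a + c = 1) (hα : 0 ≤ α) (hα' : 0 ≤ α') (q q' : Vec d) :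
    ∃ r : Vec d, ‖r‖ ≤ a * ‖q‖ + c * ‖q'‖ ∧
      a * persp h ξ q α + c * persp h ξ q' α' ≤ persp h ξ r (a * α + c * α') := by
  obtain ⟨r, hr, hrq, hrb⟩ := hh.exists_persp_eq_isBoundedUnder_ge (ξ := ξ) hα q
  obtain ⟨r', hr', hrq', hrb'⟩ := hh.exists_persp_eq_isBoundedUnder_ge (ξ := ξ) hα' q'
  refine ⟨a • r + c • r', (norm_combo_le ha hc r r').trans (by gcongr), ?_⟩
  rw [← hrq, ← hrq']
  exact hh.combo_persp_le ha hc hac hα hα' hrb hrb'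

end Perspective

section ValueFunction

variable {d : ℕ} {h₁ h₂ : Vec d → ℝ} {ξ : Vec d} {α α' β β' : ℝ × ℝ}

lemma Psi_le (hβ : 0 ≤ β) {z : ℝ}
    (H : ∀ q₁ q₂ : Vec d, ‖q₁‖ ≤ β.1 → ‖q₂‖ ≤ β.2 →
      persp h₁ ξ q₁ α.1 + persp h₂ ξ q₂ α.2 ≤ z) :
    Psi h₁ h₂ ξ α β ≤ z := by
  refine csSup_le ⟨_, 0, 0, by simpa using hβ.1, by simpa using hβ.2, rfl⟩ ?_
  rintro _ ⟨q₁, q₂, hq₁, hq₂, rfl⟩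
  exact H q₁ q₂ hq₁ hq₂

lemma le_Psi (hh₁ : ConcaveOn ℝ univ h₁) (hh₂ : ConcaveOn ℝ univ h₂) (hα : α ∈ Icc 0 1)
    {q₁ q₂ : Vec d} (hq₁ : ‖q₁‖ ≤ β.1) (hq₂ : ‖q₂‖ ≤ β.2) :
    persp h₁ ξ q₁ α.1 + persp h₂ ξ q₂ α.2 ≤ Psi h₁ h₂ ξ α β := by
  obtain ⟨C₁, hC₁⟩ := hh₁.exists_persp_le ξ β.1
  obtain ⟨C₂, hC₂⟩ := hh₂.exists_persp_le ξ β.2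
  refine le_csSup ⟨C₁ + C₂, ?_⟩ ⟨q₁, q₂, hq₁, hq₂, rfl⟩
  rintro _ ⟨p₁, p₂, hp₁, hp₂, rfl⟩
  exact add_le_add (hC₁ p₁ hp₁ _ ⟨hα.1.1, hα.2.1⟩) (hC₂ p₂ hp₂ _ ⟨hα.1.2, hα.2.2⟩)

lemma combo_Psi_le (hh₁ : ConcaveOn ℝ univ h₁) (hh₂ : ConcaveOn ℝ univ h₂)
    (hα : α ∈ Icc 0 1) (hα' : α' ∈ Icc 0 1) (hβ : 0 ≤ β) (hβ' : 0 ≤ β') {a c : ℝ}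
    (ha : 0 ≤ a) (hc : 0 ≤ c) (hac : a + c = 1) :
    a * Psi h₁ h₂ ξ α β + c * Psi h₁ h₂ ξ α' β'
      ≤ Psi h₁ h₂ ξ (a • α + c • α') (a • β + c • β') := by
  refine mul_sSup_add_mul_sSup_le ha hc ⟨_, 0, 0, by simpa using hβ.1, by simpa using hβ.2, rfl⟩
    ⟨_, 0, 0, by simpa using hβ'.1, by simpa using hβ'.2, rfl⟩ ?_
  rintro _ ⟨q₁, q₂, hq₁, hq₂, rfl⟩ _ ⟨p₁, p₂, hp₁, hp₂, rfl⟩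
  obtain ⟨r₁, hr₁, hle₁⟩ := hh₁.exists_combo_persp_le (ξ := ξ) ha hc hac hα.1.1 hα'.1.1 q₁ p₁
  obtain ⟨r₂, hr₂, hle₂⟩ := hh₂.exists_combo_persp_le (ξ := ξ) ha hc hac hα.1.2 hα'.1.2 q₂ p₂
  calc a * (persp h₁ ξ q₁ α.1 + persp h₂ ξ q₂ α.2) + c * (persp h₁ ξ p₁ α'.1 + persp h₂ ξ p₂ α'.2)
      = (a * persp h₁ ξ q₁ α.1 + c * persp h₁ ξ p₁ α'.1)
        + (a * persp h₂ ξ q₂ α.2 + c * persp h₂ ξ p₂ α'.2) := by ring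
    _ ≤ persp h₁ ξ r₁ (a * α.1 + c * α'.1) + persp h₂ ξ r₂ (a * α.2 + c * α'.2) :=
        add_le_add hle₁ hle₂
    _ ≤ Psi h₁ h₂ ξ (a • α + c • α') (a • β + c • β') :=
        le_Psi hh₁ hh₂ (convex_Icc 0 1 hα hα' ha hc hac)
          (hr₁.trans (by simp only [Prod.fst_add, Prod.smul_fst, smul_eq_mul]; gcongr))
          (hr₂.trans (by simp only [Prod.snd_add, Prod.smul_snd, smul_eq_mul]; gcongr))

lemma exists_Psi_le (hh₁ : ConcaveOn ℝ univ h₁) (hh₂ : ConcaveOn ℝ univ h₂) (ξ : Vec d)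
    (r : ℝ) : ∃ C, ∀ α ∈ Icc (0 : ℝ × ℝ) 1, ∀ β ∈ Icc (0 : ℝ × ℝ) (r, r), Psi h₁ h₂ ξ α β ≤ C := by
  obtain ⟨C₁, hC₁⟩ := hh₁.exists_persp_le ξ r
  obtain ⟨C₂, hC₂⟩ := hh₂.exists_persp_le ξ r
  refine ⟨C₁ + C₂, fun α hα β hβ => Psi_le hβ.1 fun q₁ q₂ hq₁ hq₂ => ?_⟩
  exact add_le_add (hC₁ q₁ (hq₁.trans hβ.2.1) _ ⟨hα.1.1, hα.2.1⟩)
    (hC₂ q₂ (hq₂.trans hβ.2.2) _ ⟨hα.1.2, hα.2.2⟩)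

lemma mem_Icc_of_add_eq {x : ℝ × ℝ} {s : ℝ} (h₁ : 0 ≤ x.1) (h₂ : 0 ≤ x.2) (hs : x.1 + x.2 = s) :
    x ∈ Icc 0 (s, s) :=
  ⟨⟨h₁, h₂⟩, ⟨by linarith, by linarith⟩⟩

end ValueFunction
/-- **Nested concavity of the pairwise value function** (Lemma 12).  For fixed weights `α`
in the simplex, `β ↦ Ψ(α, β)` is concave on the budget simplex `{β ≥ 0, β₁ + β₂ = b}`, and
the partial maximum `α ↦ max_β Ψ(α, β)` is concave on the weight simplex. -/
theorem Psi_nested_concavity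
    {m : ℕ} (h₁ h₂ : Vec m → ℝ)
    (hconc₁ : ConcaveOn ℝ Set.univ h₁) (hconc₂ : ConcaveOn ℝ Set.univ h₂)
    (ξhat : Vec m) (b : ℝ) (hb : 0 ≤ b) :
    (∀ α : ℝ × ℝ, 0 ≤ α.1 → 0 ≤ α.2 → α.1 + α.2 = 1 →
      ∀ β β' : ℝ × ℝ, 0 ≤ β.1 → 0 ≤ β.2 → β.1 + β.2 = b →
        0 ≤ β'.1 → 0 ≤ β'.2 → β'.1 + β'.2 = b →
        ∀ a c : ℝ, 0 ≤ a → 0 ≤ c → a + c = 1 →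
          a * Psi h₁ h₂ ξhat α β + c * Psi h₁ h₂ ξhat α β'
            ≤ Psi h₁ h₂ ξhat α (a • β + c • β')) ∧
    (∀ α α' : ℝ × ℝ, 0 ≤ α.1 → 0 ≤ α.2 → α.1 + α.2 = 1 →
      0 ≤ α'.1 → 0 ≤ α'.2 → α'.1 + α'.2 = 1 →
      ∀ a c : ℝ, 0 ≤ a → 0 ≤ c → a + c = 1 →
        a * sSup {v | ∃ β : ℝ × ℝ, 0 ≤ β.1 ∧ 0 ≤ β.2 ∧ β.1 + β.2 = b ∧
              v = Psi h₁ h₂ ξhat α β}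
          + c * sSup {v | ∃ β : ℝ × ℝ, 0 ≤ β.1 ∧ 0 ≤ β.2 ∧ β.1 + β.2 = b ∧
              v = Psi h₁ h₂ ξhat α' β}
          ≤ sSup {v | ∃ β : ℝ × ℝ, 0 ≤ β.1 ∧ 0 ≤ β.2 ∧ β.1 + β.2 = b ∧
              v = Psi h₁ h₂ ξhat (a • α + c • α') β}) := by
  refine ⟨fun α hα₁ hα₂ hαs β β' hβ₁ hβ₂ _ hβ'₁ hβ'₂ _ a c ha hc hac => ?_,
    fun α α' hα₁ hα₂ hαs hα'₁ hα'₂ hα's a c ha hc hac => ?_⟩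
  · simpa only [Convex.combo_self hac] using combo_Psi_le hconc₁ hconc₂
      (mem_Icc_of_add_eq hα₁ hα₂ hαs) (mem_Icc_of_add_eq hα₁ hα₂ hαs) ⟨hβ₁, hβ₂⟩ ⟨hβ'₁, hβ'₂⟩
      ha hc hac
  have hα := mem_Icc_of_add_eq hα₁ hα₂ hαs
  have hα' := mem_Icc_of_add_eq hα'₁ hα'₂ hα's
  obtain ⟨C, hC⟩ := exists_Psi_le hconc₁ hconc₂ ξhat b
  refine mul_sSup_add_mul_sSup_le ha hc ⟨_, (b, 0), hb, le_rfl, add_zero b, rfl⟩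
    ⟨_, (b, 0), hb, le_rfl, add_zero b, rfl⟩ ?_
  rintro _ ⟨β, hβ₁, hβ₂, hβs, rfl⟩ _ ⟨β', hβ'₁, hβ'₂, hβ's, rfl⟩
  have hγ := (convex_Icc 0 (b, b)) (mem_Icc_of_add_eq hβ₁ hβ₂ hβs)
    (mem_Icc_of_add_eq hβ'₁ hβ'₂ hβ's) ha hc hac
  refine (combo_Psi_le hconc₁ hconc₂ hα hα' ⟨hβ₁, hβ₂⟩ ⟨hβ'₁, hβ'₂⟩ ha hc hac).trans
    (le_csSup ⟨C, ?_⟩ ⟨_, hγ.1.1, hγ.1.2, ?_, rfl⟩)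
  · rintro _ ⟨γ, hγ₁, hγ₂, hγs, rfl⟩
    exact hC _ (convex_Icc 0 1 hα hα' ha hc hac) γ (mem_Icc_of_add_eq hγ₁ hγ₂ hγs)
  · simp only [Prod.fst_add, Prod.snd_add, Prod.smul_fst, Prod.smul_snd, smul_eq_mul]
    linear_combination a * hβs + c * hβ's + b * hac
end
end
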